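/- arXiv:2101.02473 — 9 statements merged into one kernel-verified Lean document; each statement's English description precedes it below -/
import Mathlib

section
/- Let f : ℝ → ℝ be continuously differentiable, and suppose there is a continuously differentiable function g : [−1,1] → ℝ with g(s) = f(1/s)/s for all s ∈ [−1,1] \ {0}. Then for every x ∈ (−1,1) with x ≠ 0, the principal value PV∫_ℝ f(y)/(x−y) dy exists and equals ∫_{−1}^{1} (f(y)−f(x))/(x−y) dy + (1/x)·∫_{−1}^{1} (g(s) − x·f(x))/(s − 1/x) ds, where both integrals on the right are ordinary (absolutely convergent) Lebesgue integrals; in particular the logarithmic terms arising from each subinterval cancel. -/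
open MeasureTheory Filter Set Topology

/-!
Split the line at `|y| = 1`. On `|y| > 1` the substitution `y = 1/s` turns `f y / (x - y)` into
`(1/x) * g s / (s - 1/x)`, which is continuous on `[-1, 1]`. On `[-1, 1]` write
`f y / (x - y) = (f y - f x) / (x - y) + f x / (x - y)`: the first term is `-dslope f x`, which
is continuous, so its truncated integrals converge by dominated convergence, while the truncated
integral of the second is exactly `f x * log ((1 + x) / (1 - x))` as soon as `ε ≤ 1 - |x|`. The
same logarithm appears with the opposite sign as `(1/x) ∫ -x f x / (s - 1/x) ds`.
-/

section Truncation

variable {E : Type*} [NormedAddCommGroup E] [NormedSpace ℝ E]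

theorem measurableSet_lt_abs_sub (ε x : ℝ) : MeasurableSet {y : ℝ | ε < |y - x|} :=
  measurableSet_lt measurable_const (by fun_prop)

theorem tendsto_setIntegral_lt_abs_sub_inter {μ : Measure ℝ} [NullSingletonClass μ]
    {φ : ℝ → E} {s : Set ℝ} (hφ : IntegrableOn φ s μ) (x : ℝ) :
    Tendsto (fun ε => ∫ y in {y | ε < |y - x|} ∩ s, φ y ∂μ) (𝓝[>] 0)
      (𝓝 (∫ y in s, φ y ∂μ)) := by
  have hind : ∀ ε, ∫ y in {y | ε < |y - x|} ∩ s, φ y ∂μ =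
      ∫ y in s, {y | ε < |y - x|}.indicator φ y ∂μ := fun ε => by
    rw [setIntegral_indicator (measurableSet_lt_abs_sub ε x), inter_comm]
  simp_rw [hind]
  refine tendsto_integral_filter_of_dominated_convergence (fun y => ‖φ y‖)
    (Eventually.of_forall fun ε =>
      hφ.aestronglyMeasurable.indicator (measurableSet_lt_abs_sub ε x))
    (Eventually.of_forall fun ε => ae_of_all _ fun y => norm_indicator_le_norm_self _ _)
    hφ.norm ?_
  filter_upwards [ae_restrict_of_ae (Measure.ae_ne μ x)] with y hy
  refine tendsto_const_nhds.congr' ?_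
  filter_upwards [Ioo_mem_nhdsGT (abs_pos.2 (sub_ne_zero.2 hy))] with ε hε
  exact (indicator_of_mem (s := {y | ε < |y - x|}) hε.2 φ).symm

theorem lt_abs_sub_inter_Icc_eq {a b x ε : ℝ} (hε : 0 ≤ ε) (ha : a ≤ x - ε)
    (hb : x + ε ≤ b) :
    {y : ℝ | ε < |y - x|} ∩ Icc a b = Ico a (x - ε) ∪ Ioc (x + ε) b := by
  ext y
  simp only [mem_inter_iff, mem_ofPred_eq, mem_Icc, mem_union, mem_Ico, mem_Ioc, lt_abs]
  constructor
  · rintro ⟨h | h, h₁, h₂⟩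
    · exact Or.inr ⟨by linarith, h₂⟩
    · exact Or.inl ⟨h₁, by linarith⟩
  · rintro (⟨h₁, h₂⟩ | ⟨h₁, h₂⟩)
    · exact ⟨Or.inr (by linarith), h₁, by linarith⟩
    · exact ⟨Or.inl (by linarith), by linarith, h₂⟩

theorem setIntegral_lt_abs_sub_inter_Icc_eq_add {φ : ℝ → E} {a b x ε : ℝ} (hε : 0 ≤ ε)
    (ha : a ≤ x - ε) (hb : x + ε ≤ b)
    (hφ : IntegrableOn φ ({y | ε < |y - x|} ∩ Icc a b)) :
    ∫ y in {y | ε < |y - x|} ∩ Icc a b, φ y =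
      (∫ y in a..x - ε, φ y) + ∫ y in x + ε..b, φ y := by
  rw [lt_abs_sub_inter_Icc_eq hε ha hb] at hφ ⊢
  have hdisj : Disjoint (Ico a (x - ε)) (Ioc (x + ε) b) :=
    disjoint_left.2 fun y h₁ h₂ => by linarith [h₁.2, h₂.1]
  rw [setIntegral_union hdisj measurableSet_Ioc (hφ.mono_set subset_union_left)
      (hφ.mono_set subset_union_right), integral_Ico_eq_integral_Ioo,
    ← integral_Ioc_eq_integral_Ioo, intervalIntegral.integral_of_le ha,
    intervalIntegral.integral_of_le hb]

end Truncation

theorem integrableOn_inv_sub_lt_abs_sub_inter_Icc {x ε : ℝ} (hε : 0 < ε) (a b : ℝ) :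
    IntegrableOn (fun y => (x - y)⁻¹) ({y | ε < |y - x|} ∩ Icc a b) := by
  have hK : IsCompact ({y : ℝ | ε ≤ |y - x|} ∩ Icc a b) :=
    isCompact_Icc.inter_left (isClosed_le continuous_const (by fun_prop))
  refine (ContinuousOn.integrableOn_compact hK ?_).mono_set
    (inter_subset_inter_left _ fun y hy => show ε ≤ |y - x| from le_of_lt hy)
  refine (continuousOn_const.sub continuousOn_id).inv₀ fun y hy => ?_
  have : 0 < |y - x| := hε.trans_le hy.1
  rw [abs_sub_comm] at this
  exact abs_pos.1 this

theorem integral_inv_sub_lt_abs_sub_inter_Icc {a b x ε : ℝ} (hε : 0 < ε) (ha : a ≤ x - ε)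
    (hb : x + ε ≤ b) :
    ∫ y in {y | ε < |y - x|} ∩ Icc a b, (x - y)⁻¹ = Real.log ((x - a) / (b - x)) := by
  rw [setIntegral_lt_abs_sub_inter_Icc_eq_add hε.le ha hb
      (integrableOn_inv_sub_lt_abs_sub_inter_Icc hε a b),
    intervalIntegral.integral_comp_sub_left (fun y => y⁻¹) x,
    intervalIntegral.integral_comp_sub_left (fun y => y⁻¹) x, sub_sub_cancel,
    integral_inv_of_pos hε (by linarith), integral_inv_of_neg (by linarith) (by linarith),
    ← Real.log_mul (div_ne_zero (by linarith) hε.ne') (div_ne_zero (by linarith) (by linarith))]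
  congr 1
  rw [show x - (x + ε) = -ε by ring, show x - b = -(b - x) by ring]
  field_simp

theorem integral_Ioo_inv_sub {a b c : ℝ} (hab : a ≤ b) (hc : c ∉ Icc a b) :
    ∫ s in Ioo a b, (s - c)⁻¹ = Real.log ((b - c) / (a - c)) := by
  rw [← integral_Ioc_eq_integral_Ioo, ← intervalIntegral.integral_of_le hab,
    intervalIntegral.integral_comp_sub_right (fun s => s⁻¹) c, integral_inv]
  rw [uIcc_of_le (sub_le_sub_right hab c)]
  rintro ⟨h₁, h₂⟩
  exact hc ⟨by linarith, by linarith⟩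

theorem integrableOn_Ioo_inv_sub {a b c : ℝ} (hc : c ∉ Icc a b) :
    IntegrableOn (fun s => (s - c)⁻¹) (Ioo a b) :=
  ((continuousOn_id.sub continuousOn_const).inv₀ fun _ hs =>
    sub_ne_zero.2 (ne_of_mem_of_not_mem hs hc)).integrableOn_Icc.mono_set Ioo_subset_Icc_self

theorem continuousOn_div_sub {g : ℝ → ℝ} {a b c : ℝ} (hg : ContinuousOn g (Icc a b))
    (hc : c ∉ Icc a b) : ContinuousOn (fun s => g s / (s - c)) (Icc a b) :=
  hg.div (continuousOn_id.sub continuousOn_const) fun _ hs =>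
    sub_ne_zero.2 (ne_of_mem_of_not_mem hs hc)

theorem integrableOn_Icc_sub_div_sub {f : ℝ → ℝ} (hf : Continuous f) {x : ℝ}
    (hfx : DifferentiableAt ℝ f x) (a b : ℝ) :
    IntegrableOn (fun y => (f y - f x) / (x - y)) (Icc a b) := by
  have hd : Continuous (dslope f x) :=
    continuousOn_univ.1 ((continuousOn_dslope univ_mem).2 ⟨hf.continuousOn, hfx⟩)
  refine hd.neg.integrableOn_Icc.congr_fun_ae ?_
  filter_upwards [ae_restrict_of_ae (Measure.ae_ne volume x)] with y hy
  rw [Pi.neg_apply, dslope_of_ne f hy, slope_def_field, ← div_neg, neg_sub]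

section Inversion

variable {E : Type*} [NormedAddCommGroup E] [NormedSpace ℝ E]

theorem image_inv_Ioo_diff_zero :
    (fun s : ℝ => s⁻¹) '' (Ioo (-1) 1 \ {0}) = {y : ℝ | 1 < |y|} := by
  rw [image_inv_eq_inv]
  ext y
  simp only [Set.mem_inv, Set.mem_sdiff, mem_Ioo, mem_singleton_iff, inv_eq_zero, mem_ofPred_eq,
    ← abs_lt, abs_inv]
  rcases eq_or_ne y 0 with rfl | hy
  · simp
  · rw [inv_lt_one₀ (abs_pos.2 hy)]
    exact ⟨And.left, fun h => ⟨h, hy⟩⟩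

theorem hasDerivWithinAt_inv_Ioo_diff_zero {s : ℝ} (hs : s ∈ Ioo (-1) 1 \ {0}) :
    HasDerivWithinAt (fun s => s⁻¹) (-(s ^ 2)⁻¹) (Ioo (-1) 1 \ {0}) s :=
  (hasDerivAt_inv hs.2).hasDerivWithinAt

theorem integrableOn_one_lt_abs_iff {φ : ℝ → E} :
    IntegrableOn φ {y : ℝ | 1 < |y|} ↔
      IntegrableOn (fun s => (s ^ 2)⁻¹ • φ s⁻¹) (Ioo (-1) 1) := by
  rw [← image_inv_Ioo_diff_zero,
    integrableOn_image_iff_integrableOn_abs_deriv_smul (measurableSet_Ioo.diff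
      (measurableSet_singleton 0)) (fun s hs => hasDerivWithinAt_inv_Ioo_diff_zero hs)
      inv_injective.injOn,
    integrableOn_congr_set_ae (sdiff_null_ae_eq_self (measure_singleton 0))]
  simp only [abs_neg, abs_inv, abs_pow, sq_abs]

theorem integral_one_lt_abs {φ : ℝ → E} :
    ∫ y in {y : ℝ | 1 < |y|}, φ y = ∫ s in Ioo (-1) 1, (s ^ 2)⁻¹ • φ s⁻¹ := by
  rw [← image_inv_Ioo_diff_zero,
    integral_image_eq_integral_abs_deriv_smul (measurableSet_Ioo.diff
      (measurableSet_singleton 0)) (fun s hs => hasDerivWithinAt_inv_Ioo_diff_zero hs)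
      inv_injective.injOn,
    setIntegral_congr_set (sdiff_null_ae_eq_self (measure_singleton 0))]
  simp only [abs_neg, abs_inv, abs_pow, sq_abs]

end Inversion

theorem lt_abs_sub_eq_inter_Icc_union {x ε : ℝ} (hε : ε ≤ 1 - |x|) :
    {y : ℝ | ε < |y - x|} = ({y | ε < |y - x|} ∩ Icc (-1) 1) ∪ {y | 1 < |y|} := by
  ext y
  by_cases hy : 1 < |y|
  · have : ε < |y - x| := by linarith [abs_sub_abs_le_abs_sub y x]
    simp only [mem_union, mem_inter_iff, mem_ofPred_eq, this, hy, or_true]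
  · simp only [mem_union, mem_inter_iff, mem_ofPred_eq, hy, or_false, mem_Icc,
      ← abs_le, le_of_not_gt hy, and_true]

theorem integral_lt_abs_sub_div_sub {f : ℝ → ℝ} (hf : Continuous f) {x ε : ℝ}
    (hfx : DifferentiableAt ℝ f x) (hε : 0 < ε) (hεx : ε ≤ 1 - |x|)
    (hout : IntegrableOn (fun y => f y / (x - y)) {y | 1 < |y|}) :
    ∫ y in {y | ε < |y - x|}, f y / (x - y) =
      (∫ y in {y | ε < |y - x|} ∩ Icc (-1) 1, (f y - f x) / (x - y)) +
        f x * Real.log ((x + 1) / (1 - x)) + ∫ y in {y | 1 < |y|}, f y / (x - y) := by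
  set A := {y : ℝ | ε < |y - x|} ∩ Icc (-1) 1
  have ha : -1 ≤ x - ε := by linarith [neg_abs_le x]
  have hb : x + ε ≤ 1 := by linarith [le_abs_self x]
  have hsplit : ∀ y, f y / (x - y) = (f y - f x) / (x - y) + f x * (x - y)⁻¹ :=
    fun y => by ring
  have hh : IntegrableOn (fun y => (f y - f x) / (x - y)) A :=
    (integrableOn_Icc_sub_div_sub hf hfx (-1) 1).mono_set inter_subset_right
  have hk : IntegrableOn (fun y => f x * (x - y)⁻¹) A :=
    (integrableOn_inv_sub_lt_abs_sub_inter_Icc hε (-1) 1).const_mul (f x)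
  have hA : ∫ y in A, f y / (x - y) =
      (∫ y in A, (f y - f x) / (x - y)) + f x * Real.log ((x + 1) / (1 - x)) := by
    simp_rw [hsplit]
    rw [integral_add hh hk, integral_const_mul,
      integral_inv_sub_lt_abs_sub_inter_Icc hε ha hb, sub_neg_eq_add]
  have hF : IntegrableOn (fun y => f y / (x - y)) A := by
    simp_rw [hsplit]
    exact hh.add hk
  have hdisj : Disjoint A {y | 1 < |y|} :=
    disjoint_left.2 fun y hy hy' => (abs_le.2 hy.2).not_gt hy'
  rw [lt_abs_sub_eq_inter_Icc_union hεx, setIntegral_union hdisj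
    (measurableSet_lt measurable_const (by fun_prop)) hF hout, hA]

section Outer

variable {f g : ℝ → ℝ} {x : ℝ}

theorem one_div_notMem_Icc (hx : |x| < 1) (hx0 : x ≠ 0) : 1 / x ∉ Icc (-1 : ℝ) 1 := by
  intro h
  have := abs_le.2 h
  rw [abs_div, abs_one, div_le_one (abs_pos.2 hx0)] at this
  linarith

theorem inv_sq_smul_div_inv_ae_eq
    (hfg : ∀ s ∈ Icc (-1 : ℝ) 1, s ≠ 0 → g s = f (1 / s) / s) (hx0 : x ≠ 0) :
    (fun s => (s ^ 2)⁻¹ • (f s⁻¹ / (x - s⁻¹))) =ᵐ[volume.restrict (Ioo (-1) 1)]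
      fun s => 1 / x * (g s / (s - 1 / x)) := by
  filter_upwards [ae_restrict_mem measurableSet_Ioo,
    ae_restrict_of_ae (Measure.ae_ne volume 0)] with s hs hs0
  rw [hfg s (Ioo_subset_Icc_self hs) hs0, smul_eq_mul]
  field_simp

theorem integrableOn_one_lt_abs_div_sub (hg : ContinuousOn g (Icc (-1) 1))
    (hfg : ∀ s ∈ Icc (-1 : ℝ) 1, s ≠ 0 → g s = f (1 / s) / s) (hx : |x| < 1)
    (hx0 : x ≠ 0) :
    IntegrableOn (fun y => f y / (x - y)) {y | 1 < |y|} :=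
  integrableOn_one_lt_abs_iff.2 <| IntegrableOn.congr_fun_ae
    (((continuousOn_div_sub hg (one_div_notMem_Icc hx hx0)).integrableOn_Icc.mono_set
      Ioo_subset_Icc_self).const_mul (1 / x))
    (inv_sq_smul_div_inv_ae_eq hfg hx0).symm

theorem integral_one_lt_abs_div_sub
    (hfg : ∀ s ∈ Icc (-1 : ℝ) 1, s ≠ 0 → g s = f (1 / s) / s) (hx0 : x ≠ 0) :
    ∫ y in {y | 1 < |y|}, f y / (x - y) = 1 / x * ∫ s in Ioo (-1) 1, g s / (s - 1 / x) := by
  rw [integral_one_lt_abs, integral_congr_ae (inv_sq_smul_div_inv_ae_eq hfg hx0),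
    integral_const_mul]

theorem integral_Ioo_inv_sub_one_div (hx : |x| < 1) (hx0 : x ≠ 0) :
    ∫ s in Ioo (-1) 1, (s - 1 / x)⁻¹ = -Real.log ((x + 1) / (1 - x)) := by
  rw [integral_Ioo_inv_sub (by norm_num) (one_div_notMem_Icc hx hx0), ← Real.log_inv]
  congr 1
  rw [inv_div, ← neg_div_neg_eq, ← mul_div_mul_left _ _ hx0]
  congr 1 <;> field_simp <;> ring

theorem one_div_mul_integral_Ioo_sub_div_sub_one_div (hg : ContinuousOn g (Icc (-1) 1))
    (hfg : ∀ s ∈ Icc (-1 : ℝ) 1, s ≠ 0 → g s = f (1 / s) / s) (hx : |x| < 1)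
    (hx0 : x ≠ 0) :
    1 / x * ∫ s in Ioo (-1) 1, (g s - x * f x) / (s - 1 / x) =
      f x * Real.log ((x + 1) / (1 - x)) + ∫ y in {y | 1 < |y|}, f y / (x - y) := by
  have hc := one_div_notMem_Icc hx hx0
  have hsplit : ∀ s, (g s - x * f x) / (s - 1 / x) =
      g s / (s - 1 / x) - x * f x * (s - 1 / x)⁻¹ := fun s => by ring
  simp_rw [hsplit]
  rw [integral_sub ((continuousOn_div_sub hg hc).integrableOn_Icc.mono_set Ioo_subset_Icc_self)
      ((integrableOn_Ioo_inv_sub hc).const_mul _),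
    integral_const_mul, integral_Ioo_inv_sub_one_div hx hx0,
    integral_one_lt_abs_div_sub hfg hx0]
  field_simp
  ring

end Outer

/-- For a continuously differentiable `f : ℝ → ℝ` such that
`s ↦ f(1/s)/s` extends to a continuously differentiable function `g` on `[−1,1]`,
and for every `x ∈ (−1,1)` with `x ≠ 0`, the principal value `PV∫_ℝ f(y)/(x−y) dy`
exists and equals
`∫_{−1}^{1} (f(y)−f(x))/(x−y) dy + (1/x)·∫_{−1}^{1} (g(s) − x·f(x))/(s − 1/x) ds`. -/
theorem pv_two_domain_formula
    (f g : ℝ → ℝ) (hf : ContDiff ℝ 1 f)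
    (hg : ContDiffOn ℝ 1 g (Icc (-1 : ℝ) 1))
    (hfg : ∀ s ∈ Icc (-1 : ℝ) 1, s ≠ 0 → g s = f (1 / s) / s)
    (x : ℝ) (hx : x ∈ Ioo (-1 : ℝ) 1) (hx0 : x ≠ 0) :
    Tendsto
      (fun ε : ℝ => ∫ y in {y : ℝ | ε < |y - x|}, f y / (x - y))
      (𝓝[>] 0)
      (𝓝 ((∫ y in Ioo (-1 : ℝ) 1, (f y - f x) / (x - y))
        + (1 / x) * ∫ s in Ioo (-1 : ℝ) 1, (g s - x * f x) / (s - 1 / x))) := by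
  have hx' : |x| < 1 := abs_lt.2 hx
  have hfx : DifferentiableAt ℝ f x := hf.differentiable one_ne_zero x
  rw [one_div_mul_integral_Ioo_sub_div_sub_one_div hg.continuousOn hfg hx' hx0,
    ← integral_Icc_eq_integral_Ioo, ← add_assoc]
  refine (((tendsto_setIntegral_lt_abs_sub_inter
    (integrableOn_Icc_sub_div_sub hf.continuous hfx (-1) 1) x).add_const _).add_const _).congr' ?_
  filter_upwards [Ioo_mem_nhdsGT (sub_pos.2 hx')] with ε hε
  exact (integral_lt_abs_sub_div_sub hf.continuous hfx hε.1 hε.2.le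
    (integrableOn_one_lt_abs_div_sub hg.continuousOn hfg hx' hx0)).symm
end

section
/- For every a > 0 and every x ∈ ℝ, the principal value PV∫_ℝ (1/(a² + y²))·(1/(x−y)) dy exists and equals π·x/(a·(a² + x²)). -/
open MeasureTheory Filter Set Topology Real Bornology

/-!
Partial fractions, `1 / ((a² + y²)(x - y)) = (1 / (x - y) + (x + y) / (a² + y²)) / (a² + x²)`,
give the primitive `F y = (log (a² + y²) / 2 + (x / a) arctan (y / a) - log |y - x|) / (a² + x²)`
on both sides of `x`. The integral over `|y - x| > ε` is therefore `F (x - ε) - F (x + ε)` plus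
the jump `π x / (a (a² + x²))` of `F` between `-∞` and `+∞`. The singular terms `log ε` cancel in
`F (x - ε) - F (x + ε)`, and what remains is continuous in `ε` and vanishes at `ε = 0`.
-/

theorem setOf_lt_abs_sub_eq_union (x ε : ℝ) :
    {y : ℝ | ε < |y - x|} = Iio (x - ε) ∪ Ioi (x + ε) := by
  ext y
  simp only [mem_ofPred_eq, mem_union, mem_Iio, mem_Ioi, lt_abs]
  constructor <;> rintro (h | h) <;> [right; left; right; left] <;> linarith

theorem integral_lt_abs_sub_eq_of_hasDerivAt {F f : ℝ → ℝ} {x ε mBot mTop : ℝ} (hε : 0 < ε)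
    (hderiv : ∀ y ≠ x, HasDerivAt F (f y) y) (hint : IntegrableOn f {y | ε ≤ |y - x|})
    (hbot : Tendsto F atBot (𝓝 mBot)) (htop : Tendsto F atTop (𝓝 mTop)) :
    ∫ y in {y | ε < |y - x|}, f y = F (x - ε) - mBot + (mTop - F (x + ε)) := by
  have hleft : Iic (x - ε) ⊆ {y | ε ≤ |y - x|} := fun y (hy : y ≤ x - ε) => by
    rw [mem_ofPred_eq, abs_of_neg (by linarith)]; linarith
  have hright : Ioi (x + ε) ⊆ {y | ε ≤ |y - x|} := fun y (hy : x + ε < y) => by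
    rw [mem_ofPred_eq, abs_of_pos (by linarith)]; linarith
  have hdisj : Disjoint (Iio (x - ε)) (Ioi (x + ε)) :=
    (Iic_disjoint_Ioi (by linarith)).mono_left Iio_subset_Iic_self
  rw [setOf_lt_abs_sub_eq_union, setIntegral_union hdisj measurableSet_Ioi
    ((hint.mono_set hleft).mono_set Iio_subset_Iic_self) (hint.mono_set hright), setIntegral_congr_set Iio_ae_eq_Iic,
    integral_Iic_of_hasDerivAt_of_tendsto' (fun y (hy : y ≤ x - ε) => hderiv y (by linarith))
      (hint.mono_set hleft) hbot,
    integral_Ioi_of_hasDerivAt_of_tendsto' (fun y (hy : x + ε ≤ y) => hderiv y (by linarith))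
      (hint.mono_set hright) htop]

theorem integrable_inv_sq_add_sq {a : ℝ} (ha : a ≠ 0) :
    Integrable fun y : ℝ => (a ^ 2 + y ^ 2)⁻¹ := by
  refine ((integrable_inv_one_add_sq.comp_div ha).const_mul (a ^ 2)⁻¹).congr
    (.of_forall fun y => ?_)
  field_simp

theorem integrableOn_inv_sq_add_sq_mul_inv_sub {a : ℝ} (ha : a ≠ 0) (x : ℝ) {ε : ℝ}
    (hε : 0 < ε) :
    IntegrableOn (fun y : ℝ => 1 / (a ^ 2 + y ^ 2) * (1 / (x - y))) {y | ε ≤ |y - x|} := by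
  have hs : MeasurableSet {y : ℝ | ε ≤ |y - x|} := measurableSet_le measurable_const (by fun_prop)
  have hbound : ∀ᵐ y ∂volume.restrict {y : ℝ | ε ≤ |y - x|}, ‖(x - y)⁻¹‖ ≤ ε⁻¹ := by
    refine (ae_restrict_iff' hs).2 (.of_forall fun y (hy : ε ≤ |y - x|) => ?_)
    rw [norm_inv, Real.norm_eq_abs, abs_sub_comm]
    exact inv_anti₀ hε hy
  simp only [one_div]
  exact (integrable_inv_sq_add_sq ha).integrableOn.mul_bdd
    (by fun_prop : Measurable fun y => (x - y)⁻¹).aestronglyMeasurable hbound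

theorem tendsto_log_sq_add_sq_div_two_sub_log_sub_cobounded (a x : ℝ) :
    Tendsto (fun y => log (a ^ 2 + y ^ 2) / 2 - log (y - x)) (cobounded ℝ) (𝓝 0) := by
  have hinv : Tendsto (fun y : ℝ => y⁻¹) (cobounded ℝ) (𝓝 0) := tendsto_inv₀_cobounded
  have hnum : Tendsto (fun y : ℝ => a ^ 2 * y⁻¹ ^ 2 + 1) (cobounded ℝ) (𝓝 1) := by
    simpa using ((hinv.pow 2).const_mul (a ^ 2)).add_const 1
  have hden : Tendsto (fun y : ℝ => (1 - x * y⁻¹) ^ 2) (cobounded ℝ) (𝓝 1) := by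
    simpa using ((tendsto_const_nhds (x := (1 : ℝ))).sub (hinv.const_mul x)).pow 2
  have hratio : Tendsto (fun y : ℝ => (a ^ 2 * y⁻¹ ^ 2 + 1) / (1 - x * y⁻¹) ^ 2)
      (cobounded ℝ) (𝓝 1) := by
    simpa only [div_one] using! hnum.div hden one_ne_zero
  have hlim := ((continuousAt_log one_ne_zero).tendsto.comp hratio).div_const 2
  rw [log_one, zero_div] at hlim
  refine hlim.congr' ?_
  filter_upwards [eventually_ne_cobounded 0, eventually_ne_cobounded x] with y hy0 hyx
  have hyx' : y - x ≠ 0 := sub_ne_zero.2 hyx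
  have hsq : a ^ 2 + y ^ 2 ≠ 0 := by positivity
  have hrw : (a ^ 2 * y⁻¹ ^ 2 + 1) / (1 - x * y⁻¹) ^ 2 = (a ^ 2 + y ^ 2) / (y - x) ^ 2 := by
    field_simp
  rw [Function.comp_apply, hrw, log_div hsq (pow_ne_zero 2 hyx'), log_pow]
  push_cast
  ring

noncomputable def lorentzRegularPart (a x y : ℝ) : ℝ :=
  log (a ^ 2 + y ^ 2) / 2 + x / a * arctan (y / a)

/-- `Real.log (y - x) = log |y - x|`, so this is a primitive on both sides of `x`. -/
noncomputable def lorentzCauchyPrimitive (a x y : ℝ) : ℝ :=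
  (lorentzRegularPart a x y - log (y - x)) / (a ^ 2 + x ^ 2)

theorem continuous_lorentzRegularPart {a : ℝ} (ha : a ≠ 0) (x : ℝ) :
    Continuous (lorentzRegularPart a x) := by
  have hpos : ∀ y : ℝ, a ^ 2 + y ^ 2 ≠ 0 := fun y => by positivity
  unfold lorentzRegularPart
  fun_prop (disch := exact hpos _)

theorem hasDerivAt_lorentzCauchyPrimitive {a x y : ℝ} (ha : a ≠ 0) (hy : y ≠ x) :
    HasDerivAt (lorentzCauchyPrimitive a x) (1 / (a ^ 2 + y ^ 2) * (1 / (x - y))) y := by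
  have hsq : a ^ 2 + y ^ 2 ≠ 0 := by positivity
  have hlog : HasDerivAt (fun y => log (a ^ 2 + y ^ 2)) (2 * y / (a ^ 2 + y ^ 2)) y := by
    simpa using ((hasDerivAt_pow 2 y).const_add (a ^ 2)).log hsq
  have harctan : HasDerivAt (fun y => arctan (y / a)) (1 / (1 + (y / a) ^ 2) * (1 / a)) y :=
    ((hasDerivAt_id' y).div_const a).arctan
  have hlog' : HasDerivAt (fun y => log (y - x)) (1 / (y - x)) y := by
    simpa using ((hasDerivAt_id y).sub_const x).log (sub_ne_zero.2 hy)
  refine (((hlog.div_const 2).add (harctan.const_mul (x / a))).sub hlog').div_const _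
    |>.congr_deriv ?_
  have hyx : y - x ≠ 0 := sub_ne_zero.2 hy
  have hxy : x - y ≠ 0 := sub_ne_zero.2 hy.symm
  have hxa : a ^ 2 + x ^ 2 ≠ 0 := by positivity
  field_simp
  ring

theorem tendsto_lorentzCauchyPrimitive (a x : ℝ) {l : Filter ℝ} (hl : l ≤ cobounded ℝ) {θ : ℝ}
    (harctan : Tendsto (fun y => arctan (y / a)) l (𝓝 θ)) :
    Tendsto (lorentzCauchyPrimitive a x) l (𝓝 (x / a * θ / (a ^ 2 + x ^ 2))) := by
  have hlim := (((tendsto_log_sq_add_sq_div_two_sub_log_sub_cobounded a x).mono_left hl).add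
    (harctan.const_mul (x / a))).div_const (a ^ 2 + x ^ 2)
  rw [zero_add] at hlim
  refine hlim.congr fun y => ?_
  simp only [lorentzCauchyPrimitive, lorentzRegularPart]
  ring

/-- For every `a > 0` and every `x ∈ ℝ`, the principal value
`PV∫_ℝ (1/(a² + y²))·(1/(x−y)) dy` exists and equals `π·x/(a·(a² + x²))`. -/
theorem pv_lorentzian (a : ℝ) (ha : 0 < a) (x : ℝ) :
    Tendsto
      (fun ε : ℝ => ∫ y in {y : ℝ | ε < |y - x|}, (1 / (a ^ 2 + y ^ 2)) * (1 / (x - y)))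
      (𝓝[>] 0)
      (𝓝 (Real.pi * x / (a * (a ^ 2 + x ^ 2)))) := by
  set R := lorentzRegularPart a x
  have htop := tendsto_lorentzCauchyPrimitive a x IsOrderBornology.atTop_le_cobounded
    ((tendsto_arctan_atTop.mono_right nhdsWithin_le_nhds).comp (tendsto_id.atTop_div_const ha))
  have hbot := tendsto_lorentzCauchyPrimitive a x IsOrderBornology.atBot_le_cobounded
    ((tendsto_arctan_atBot.mono_right nhdsWithin_le_nhds).comp (tendsto_id.atBot_div_const ha))
  have hformula : ∀ ε ∈ Ioi (0 : ℝ),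
      (R (x - ε) - R (x + ε) + x / a * π) / (a ^ 2 + x ^ 2) =
        ∫ y in {y : ℝ | ε < |y - x|}, 1 / (a ^ 2 + y ^ 2) * (1 / (x - y)) := by
    intro ε hε
    rw [integral_lt_abs_sub_eq_of_hasDerivAt hε
      (fun y hy => hasDerivAt_lorentzCauchyPrimitive ha.ne' hy)
      (integrableOn_inv_sq_add_sq_mul_inv_sub ha.ne' x hε) hbot htop]
    simp only [lorentzCauchyPrimitive, sub_sub_cancel_left, add_sub_cancel_left, log_neg_eq_log]
    ring
  have hcont : Continuous fun ε => (R (x - ε) - R (x + ε) + x / a * π) / (a ^ 2 + x ^ 2) := by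
    have := continuous_lorentzRegularPart ha.ne' x
    fun_prop
  refine Tendsto.congr' (eventually_nhdsWithin_of_forall hformula) ?_
  convert (hcont.tendsto 0).mono_left nhdsWithin_le_nhds using 2
  simp only [sub_zero, add_zero, sub_self, zero_add]
  field_simp
end

section
/- For every x ∈ ℝ, the principal value PV∫_ℝ (1/(1 + y⁴))·(1/(x−y)) dy exists and equals π·x·(1 + x²)/(√2·(1 + x⁴)). -/
/-!
By partial fractions, `(1 + y⁴) + (x - y)(x³ + x²y + xy² + y³) = 1 + x⁴`, so
`(1 + x⁴) / ((1 + y⁴)(x - y))` has an explicit primitive `F = G - log |x - y|` with `G` smooth.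
The logarithmic singularity is symmetric about `x`, so it cancels in `F (x - ε) - F (x + ε)`, and
the principal value equals `(F (+∞) - F (-∞)) / (1 + x⁴)`. The logarithmic terms of `F` vanish at
both ends and `arctan (y²)` has the same limit at both ends, so only the arctangent pair
`arctan (√2 y + 1) + arctan (√2 y - 1)`, which rises from `-π` to `π`, contributes.
-/

open MeasureTheory Filter Set Topology Bornology Real

lemma sq_add_sqrt_two_mul_add_one_pos (y : ℝ) : 0 < y ^ 2 + √2 * y + 1 := by
  nlinarith [sq_sqrt (zero_le_two : (0 : ℝ) ≤ 2), sq_nonneg (2 * y + √2)]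

lemma sq_sub_sqrt_two_mul_add_one_pos (y : ℝ) : 0 < y ^ 2 - √2 * y + 1 := by
  nlinarith [sq_sqrt (zero_le_two : (0 : ℝ) ≤ 2), sq_nonneg (2 * y - √2)]

lemma one_add_pow_four_eq_mul (y : ℝ) :
    1 + y ^ 4 = (y ^ 2 + √2 * y + 1) * (y ^ 2 - √2 * y + 1) := by
  linear_combination y ^ 2 * sq_sqrt (zero_le_two : (0 : ℝ) ≤ 2)

noncomputable def quarticLog (y : ℝ) : ℝ :=
  log (y ^ 2 + √2 * y + 1) - log (y ^ 2 - √2 * y + 1)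

noncomputable def quarticArctan (y : ℝ) : ℝ :=
  arctan (√2 * y + 1) + arctan (√2 * y - 1)

lemma hasDerivAt_quarticLog (y : ℝ) :
    HasDerivAt quarticLog (2 * √2 * (1 - y ^ 2) / (1 + y ^ 4)) y := by
  have hP : HasDerivAt (fun y => y ^ 2 + √2 * y + 1) (2 * y + √2) y := by
    simpa using ((hasDerivAt_pow 2 y).add ((hasDerivAt_id y).const_mul √2)).add_const 1
  have hQ : HasDerivAt (fun y => y ^ 2 - √2 * y + 1) (2 * y - √2) y := by
    simpa using ((hasDerivAt_pow 2 y).sub ((hasDerivAt_id y).const_mul √2)).add_const 1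
  have hp := sq_add_sqrt_two_mul_add_one_pos y
  have hq := sq_sub_sqrt_two_mul_add_one_pos y
  refine ((hP.log hp.ne').sub (hQ.log hq.ne')).congr_deriv ?_
  rw [one_add_pow_four_eq_mul, div_sub_div _ _ hp.ne' hq.ne']
  ring

lemma hasDerivAt_quarticArctan (y : ℝ) :
    HasDerivAt quarticArctan (√2 * (1 + y ^ 2) / (1 + y ^ 4)) y := by
  have hP : HasDerivAt (fun y => √2 * y + 1) √2 y := by
    simpa using ((hasDerivAt_id y).const_mul √2).add_const 1
  have hQ : HasDerivAt (fun y => √2 * y - 1) √2 y := by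
    simpa using ((hasDerivAt_id y).const_mul √2).sub_const 1
  refine (hP.arctan.add hQ.arctan).congr_deriv ?_
  have hs : √2 ^ 2 = 2 := sq_sqrt zero_le_two
  field_simp
  linear_combination (2 * y ^ 2 - (√2 ^ 2 + 2) * y ^ 4 - √2 ^ 2 * y ^ 6) * hs

lemma quarticLog_inv (y : ℝ) : quarticLog y⁻¹ = quarticLog y := by
  rcases eq_or_ne y 0 with rfl | hy
  · simp
  have hy2 : y ^ 2 ≠ 0 := pow_ne_zero 2 hy
  unfold quarticLog
  rw [show y⁻¹ ^ 2 + √2 * y⁻¹ + 1 = (y ^ 2 + √2 * y + 1) / y ^ 2 by field_simp; ring,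
    show y⁻¹ ^ 2 - √2 * y⁻¹ + 1 = (y ^ 2 - √2 * y + 1) / y ^ 2 by field_simp; ring,
    log_div (sq_add_sqrt_two_mul_add_one_pos y).ne' hy2,
    log_div (sq_sub_sqrt_two_mul_add_one_pos y).ne' hy2]
  ring

lemma tendsto_cobounded_of_eventuallyEq_comp_inv {𝕜 E : Type*} [NormedDivisionRing 𝕜]
    [TopologicalSpace E] {f g : 𝕜 → E} (hg : ContinuousAt g 0)
    (hfg : f =ᶠ[cobounded 𝕜] fun y => g y⁻¹) : Tendsto f (cobounded 𝕜) (𝓝 (g 0)) :=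
  (hg.tendsto.comp tendsto_inv₀_cobounded).congr' hfg.symm

lemma tendsto_quarticLog_cobounded : Tendsto quarticLog (cobounded ℝ) (𝓝 0) := by
  simpa [quarticLog] using tendsto_cobounded_of_eventuallyEq_comp_inv
    (hasDerivAt_quarticLog 0).continuousAt (.of_eq (funext fun y => (quarticLog_inv y).symm))

lemma tendsto_log_one_add_pow_four_sub_cobounded (x : ℝ) :
    Tendsto (fun y => log (1 + y ^ 4) - 4 * log (x - y)) (cobounded ℝ) (𝓝 0) := by
  have hg : ContinuousAt (fun u : ℝ => log (1 + u ^ 4) - 4 * log (x * u - 1)) 0 := by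
    fun_prop (disch := simp)
  simpa using tendsto_cobounded_of_eventuallyEq_comp_inv hg <| by
    filter_upwards [eventually_ne_cobounded 0, eventually_ne_cobounded x] with y hy hyx
    rw [show 1 + y⁻¹ ^ 4 = (1 + y ^ 4) / y ^ 4 by field_simp; ring,
      show x * y⁻¹ - 1 = (x - y) / y by field_simp,
      log_div (by positivity) (by positivity), log_div (sub_ne_zero.2 hyx.symm) hy, log_pow]
    push_cast
    ring

lemma tendsto_arctan_sq_cobounded :
    Tendsto (fun y : ℝ => arctan (y ^ 2)) (cobounded ℝ) (𝓝 (π / 2)) := by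
  refine (tendsto_arctan_atTop.mono_right nhdsWithin_le_nhds).comp ?_
  simpa only [Function.comp_def, norm_eq_abs, sq_abs] using
    (tendsto_pow_atTop two_ne_zero).comp (tendsto_norm_cobounded_atTop (E := ℝ))

lemma tendsto_quarticArctan_atTop : Tendsto quarticArctan atTop (𝓝 π) := by
  have h : ∀ c : ℝ, Tendsto (fun y => arctan (√2 * y + c)) atTop (𝓝 (π / 2)) := fun c =>
    (tendsto_arctan_atTop.mono_right nhdsWithin_le_nhds).comp
      (tendsto_atTop_add_const_right _ c (tendsto_id.const_mul_atTop (by positivity)))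
  unfold quarticArctan
  convert (h 1).add (h (-1)) using 3 <;> ring_nf

lemma tendsto_quarticArctan_atBot : Tendsto quarticArctan atBot (𝓝 (-π)) := by
  have h : ∀ c : ℝ, Tendsto (fun y => arctan (√2 * y + c)) atBot (𝓝 (-(π / 2))) := fun c =>
    (tendsto_arctan_atBot.mono_right nhdsWithin_le_nhds).comp
      (tendsto_atBot_add_const_right _ c (tendsto_id.const_mul_atBot (by positivity)))
  unfold quarticArctan
  convert (h 1).add (h (-1)) using 3 <;> ring_nf

noncomputable def pvRegularPart (x y : ℝ) : ℝ :=
  (x ^ 3 + x) / (2 * √2) * quarticArctan y + x ^ 2 / 2 * arctan (y ^ 2) +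
    (x ^ 3 - x) / (4 * √2) * quarticLog y + log (1 + y ^ 4) / 4

/-- `Real.log` is `log |·|`, so this is a primitive on both sides of `x`. -/
noncomputable def pvPrimitive (x y : ℝ) : ℝ := pvRegularPart x y - log (x - y)

lemma hasDerivAt_pvRegularPart (x y : ℝ) :
    HasDerivAt (pvRegularPart x) ((x ^ 3 + x ^ 2 * y + x * y ^ 2 + y ^ 3) / (1 + y ^ 4)) y := by
  have h := ((((hasDerivAt_quarticArctan y).const_mul ((x ^ 3 + x) / (2 * √2))).add
    ((hasDerivAt_pow 2 y).arctan.const_mul (x ^ 2 / 2))).add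
    ((hasDerivAt_quarticLog y).const_mul ((x ^ 3 - x) / (4 * √2)))).add
    ((((hasDerivAt_pow 4 y).const_add 1).log (by positivity)).div_const 4)
  refine h.congr_deriv ?_
  field_simp
  ring

lemma hasDerivAt_pvPrimitive {x y : ℝ} (hxy : y ≠ x) :
    HasDerivAt (pvPrimitive x) ((1 + x ^ 4) * (1 / (1 + y ^ 4) * (1 / (x - y)))) y := by
  have hxy' : x - y ≠ 0 := sub_ne_zero.2 hxy.symm
  refine ((hasDerivAt_pvRegularPart x y).sub
    (((hasDerivAt_id' y).const_sub x).log hxy')).congr_deriv ?_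
  field_simp
  ring

lemma tendsto_pvPrimitive (x : ℝ) {l : Filter ℝ} (hl : l ≤ cobounded ℝ) {L : ℝ}
    (hL : Tendsto quarticArctan l (𝓝 L)) :
    Tendsto (pvPrimitive x) l (𝓝 ((x ^ 3 + x) / (2 * √2) * L + π * x ^ 2 / 4)) := by
  have h := (((hL.const_mul ((x ^ 3 + x) / (2 * √2))).add
    ((tendsto_arctan_sq_cobounded.mono_left hl).const_mul (x ^ 2 / 2))).add
    ((tendsto_quarticLog_cobounded.mono_left hl).const_mul ((x ^ 3 - x) / (4 * √2)))).add
    (((tendsto_log_one_add_pow_four_sub_cobounded x).mono_left hl).div_const 4)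
  convert h using 2
  · simp only [pvPrimitive, pvRegularPart]
    ring
  · ring

lemma tendsto_pvPrimitive_sub_pvPrimitive (x : ℝ) :
    Tendsto (fun ε => pvPrimitive x (x - ε) - pvPrimitive x (x + ε)) (𝓝 0) (𝓝 0) := by
  have hcont := (hasDerivAt_pvRegularPart x x).continuousAt.tendsto
  have hlim := (hcont.comp ((continuous_sub_left x).tendsto' 0 x (sub_zero x))).sub
    (hcont.comp ((continuous_const_add x).tendsto' 0 x (add_zero x)))
  rw [sub_self] at hlim
  refine hlim.congr fun ε => ?_
  simp only [Function.comp_apply, pvPrimitive, sub_sub_cancel, sub_add_cancel_left,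
    log_neg_eq_log]
  ring

lemma setOf_lt_abs_sub_eq_Iio_union_Ioi (a ε : ℝ) :
    {y : ℝ | ε < |y - a|} = Iio (a - ε) ∪ Ioi (a + ε) := by
  ext y
  simp only [mem_ofPred_eq, mem_union, mem_Iio, mem_Ioi, lt_abs]
  constructor <;> rintro (h | h) <;> [right; left; right; left] <;> linarith

theorem tendsto_setIntegral_lt_abs_sub_of_hasDerivAt {f F : ℝ → ℝ} {a l₁ l₂ : ℝ}
    (hF : ∀ y ≠ a, HasDerivAt F (f y) y) (hf : ∀ ε > 0, IntegrableOn f {y | ε < |y - a|})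
    (hbot : Tendsto F atBot (𝓝 l₁)) (htop : Tendsto F atTop (𝓝 l₂))
    (hsymm : Tendsto (fun ε => F (a - ε) - F (a + ε)) (𝓝[>] 0) (𝓝 0)) :
    Tendsto (fun ε => ∫ y in {y | ε < |y - a|}, f y) (𝓝[>] 0) (𝓝 (l₂ - l₁)) := by
  have hlim := (tendsto_const_nhds (x := l₂ - l₁)).add hsymm
  rw [add_zero] at hlim
  refine hlim.congr' ?_
  filter_upwards [self_mem_nhdsWithin] with ε (hε : 0 < ε)
  have hint := hf ε hε
  rw [setOf_lt_abs_sub_eq_Iio_union_Ioi] at hint ⊢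
  have hbelow : ∫ y in Iio (a - ε), f y = F (a - ε) - l₁ := by
    rw [setIntegral_congr_set Iio_ae_eq_Iic]
    exact integral_Iic_of_hasDerivAt_of_tendsto' (fun y hy => hF y (by grind))
      ((hint.mono_set subset_union_left).congr_set_ae Iio_ae_eq_Iic.symm) hbot
  have habove : ∫ y in Ioi (a + ε), f y = l₂ - F (a + ε) :=
    integral_Ioi_of_hasDerivAt_of_tendsto' (fun y hy => hF y (by grind))
      (hint.mono_set subset_union_right) htop
  have hdisj : Disjoint (Iio (a - ε)) (Ioi (a + ε)) :=
    (Iic_disjoint_Ioi (by linarith)).mono_left Iio_subset_Iic_self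
  rw [setIntegral_union hdisj measurableSet_Ioi (hint.mono_set subset_union_left)
    (hint.mono_set subset_union_right), hbelow, habove]
  ring

lemma integrable_one_div_one_add_pow_four : Integrable fun y : ℝ => 1 / (1 + y ^ 4) := by
  refine (integrable_inv_one_add_sq.const_mul 2).mono'
    (by fun_prop : Measurable fun y : ℝ => 1 / (1 + y ^ 4)).aestronglyMeasurable
    (.of_forall fun y => ?_)
  rw [norm_of_nonneg (by positivity), ← div_eq_mul_inv,
    div_le_div_iff₀ (by positivity) (by positivity)]
  nlinarith [sq_nonneg (y ^ 2 - 1)]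

lemma MeasureTheory.Integrable.integrableOn_mul_one_div_sub {g : ℝ → ℝ} (hg : Integrable g)
    {x ε : ℝ} (hε : 0 < ε) : IntegrableOn (fun y => g y * (1 / (x - y))) {y | ε < |y - x|} := by
  refine hg.integrableOn.mul_bdd (c := 1 / ε)
    (by fun_prop : Measurable fun y => 1 / (x - y)).aestronglyMeasurable ?_
  refine ae_restrict_of_forall_mem (measurableSet_lt measurable_const (by fun_prop)) fun y hy => ?_
  rw [norm_div, norm_one, norm_eq_abs, abs_sub_comm]
  exact one_div_le_one_div_of_le hε hy.le

/-- For every `x ∈ ℝ`, the principal value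
`PV∫_ℝ (1/(1 + y⁴))·(1/(x−y)) dy` exists and equals
`π·x·(1 + x²)/(√2·(1 + x⁴))`. -/
theorem pv_quartic (x : ℝ) :
    Tendsto
      (fun ε : ℝ => ∫ y in {y : ℝ | ε < |y - x|}, (1 / (1 + y ^ 4)) * (1 / (x - y)))
      (𝓝[>] 0)
      (𝓝 (Real.pi * x * (1 + x ^ 2) / (Real.sqrt 2 * (1 + x ^ 4)))) := by
  have hx : 1 + x ^ 4 ≠ 0 := by positivity
  have h := tendsto_setIntegral_lt_abs_sub_of_hasDerivAt (fun y hy => hasDerivAt_pvPrimitive hy)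
    (fun ε hε => (integrable_one_div_one_add_pow_four.integrableOn_mul_one_div_sub hε).const_mul _)
    (tendsto_pvPrimitive x IsOrderBornology.atBot_le_cobounded tendsto_quarticArctan_atBot)
    (tendsto_pvPrimitive x IsOrderBornology.atTop_le_cobounded tendsto_quarticArctan_atTop)
    ((tendsto_pvPrimitive_sub_pvPrimitive x).mono_left nhdsWithin_le_nhds)
  convert h.div_const (1 + x ^ 4) using 2
  · rw [integral_const_mul, mul_div_cancel_left₀ _ hx]
  · field_simp
    ring
end

section
/- For every a > 0 and every x ∈ (−1,1), the principal value PV∫_{−1}^{1} (1/(a² + y²))·(1/(x−y)) dy exists and equals (2x/a)·arctan(1/a)/(a² + x²) + log((1+x)/(1−x))/(a² + x²). Equivalently, the regularized integral ∫_{−1}^{1} (1/(a² + y²) − 1/(a² + x²))/(x−y) dy equals (2x/a)·arctan(1/a)/(a² + x²). -/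
open MeasureTheory Filter Set Topology Real intervalIntegral

/-! Splitting `f y / (x - y) = f x / (x - y) + (f y - f x) / (x - y)`, the Cauchy kernel integrates
over the symmetrically truncated interval to exactly `log (x - b) - log (c - x)`, the two `log ε`
contributions cancelling, while the integrable slope term converges by dominated convergence. For
`f y = 1 / (a² + y²)` the slope is `(x + y) / ((a² + y²) (a² + x²))`, which has the primitive
`(x / a) arctan (y / a) + log (a² + y²) / 2` up to the factor `1 / (a² + x²)`. -/

theorem setOf_mem_Ioo_and_lt_abs_sub {b c x ε : ℝ} (hbx : b ≤ x) (hxc : x ≤ c) (hε : 0 ≤ ε) :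
    {y : ℝ | y ∈ Ioo b c ∧ ε < |y - x|} = Ioo b (x - ε) ∪ Ioo (x + ε) c := by
  ext y
  simp only [mem_ofPred_eq, mem_Ioo, mem_union, lt_abs]
  constructor
  · rintro ⟨⟨hby, hyc⟩, h | h⟩
    · exact Or.inr ⟨by linarith, hyc⟩
    · exact Or.inl ⟨hby, by linarith⟩
  · rintro (⟨hby, hyx⟩ | ⟨hxy, hyc⟩)
    · exact ⟨⟨hby, by linarith⟩, Or.inr (by linarith)⟩
    · exact ⟨⟨by linarith, hyc⟩, Or.inl (by linarith)⟩

theorem tendsto_setIntegral_lt_abs_sub {E : Type*} [NormedAddCommGroup E] [NormedSpace ℝ E]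
    {μ : Measure ℝ} [NullSingletonClass μ] {s : Set ℝ} {h : ℝ → E} (x : ℝ)
    (hh : IntegrableOn h s μ) :
    Tendsto (fun ε : ℝ => ∫ y in {y : ℝ | y ∈ s ∧ ε < |y - x|}, h y ∂μ) (𝓝[>] 0)
      (𝓝 (∫ y in s, h y ∂μ)) := by
  have hmeas (ε : ℝ) : MeasurableSet {y : ℝ | ε < |y - x|} :=
    measurableSet_lt measurable_const (by fun_prop)
  have hset (ε : ℝ) : {y : ℝ | y ∈ s ∧ ε < |y - x|} = s ∩ {y : ℝ | ε < |y - x|} := rfl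
  simp_rw [hset, ← setIntegral_indicator (hmeas _)]
  refine tendsto_integral_filter_of_dominated_convergence (fun y => ‖h y‖)
    (Eventually.of_forall fun ε => hh.aestronglyMeasurable.indicator (hmeas ε))
    (Eventually.of_forall fun ε => ae_of_all _ fun y => norm_indicator_le_norm_self _ _)
    hh.norm ?_
  filter_upwards [ae_restrict_of_ae (compl_mem_ae_iff.mpr (measure_singleton x))] with y hy
  have hpos : 0 < |y - x| := abs_pos.mpr (sub_ne_zero.mpr hy)
  refine tendsto_const_nhds.congr' ?_
  filter_upwards [Ioo_mem_nhdsGT hpos] with ε hε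
  exact (indicator_of_mem (s := {y : ℝ | ε < |y - x|}) hε.2 h).symm

theorem integral_inv_sub_left {b x ε : ℝ} (hε : 0 < ε) (hb : b < x - ε) :
    ∫ y in b..x - ε, (x - y)⁻¹ = log (x - b) - log ε := by
  rw [integral_comp_sub_left (fun t => t⁻¹), sub_sub_cancel,
    integral_inv_of_pos hε (by linarith), log_div (by linarith) hε.ne']

theorem integral_inv_sub_right {c x ε : ℝ} (hε : 0 < ε) (hc : x + ε < c) :
    ∫ y in x + ε..c, (x - y)⁻¹ = log ε - log (c - x) := by
  rw [integral_comp_sub_left (fun t => t⁻¹), sub_add_cancel_left,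
    integral_inv_of_neg (by linarith) (by linarith), ← neg_sub c x, neg_div_neg_eq,
    log_div hε.ne' (by linarith)]

theorem integrableOn_inv_sub_of_lt_abs_sub {μ : Measure ℝ} {s : Set ℝ} {x ε : ℝ}
    (hs : μ s ≠ ⊤) (hε : 0 < ε) :
    IntegrableOn (fun y => (x - y)⁻¹) {y : ℝ | y ∈ s ∧ ε < |y - x|} μ := by
  have hmeas : MeasurableSet {y : ℝ | ε < |y - x|} :=
    measurableSet_lt measurable_const (by fun_prop)
  refine Measure.integrableOn_of_bounded (M := ε⁻¹)
    (measure_lt_top_mono inter_subset_left hs.lt_top).ne (by fun_prop)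
    (ae_restrict_of_ae_restrict_of_subset inter_subset_right
      (ae_restrict_of_forall_mem hmeas fun y hy => ?_))
  rw [norm_inv, Real.norm_eq_abs, abs_sub_comm]
  exact inv_anti₀ hε hy.le

theorem setIntegral_inv_sub_of_lt_abs_sub {b c x ε : ℝ} (hε : 0 < ε) (hb : b < x - ε)
    (hc : x + ε < c) :
    ∫ y in {y : ℝ | y ∈ Ioo b c ∧ ε < |y - x|}, (x - y)⁻¹ = log (x - b) - log (c - x) := by
  have hint := integrableOn_inv_sub_of_lt_abs_sub (μ := volume) (s := Ioo b c) (x := x)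
    measure_Ioo_lt_top.ne hε
  rw [setOf_mem_Ioo_and_lt_abs_sub (by linarith) (by linarith) hε.le] at hint ⊢
  rw [setIntegral_union (disjoint_left.2 fun y hyl hyr => by linarith [hyl.2, hyr.1])
      measurableSet_Ioo (hint.mono_set subset_union_left)
      (hint.mono_set subset_union_right),
    ← integral_Ioc_eq_integral_Ioo, ← integral_Ioc_eq_integral_Ioo,
    ← integral_of_le hb.le, ← integral_of_le hc.le,
    integral_inv_sub_left hε hb, integral_inv_sub_right hε hc]
  ring

theorem tendsto_setIntegral_div_sub_of_lt_abs_sub {f : ℝ → ℝ} {b c x : ℝ} (hx : x ∈ Ioo b c)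
    (hf : IntegrableOn (fun y => (f y - f x) / (x - y)) (Ioo b c)) :
    Tendsto (fun ε : ℝ => ∫ y in {y : ℝ | y ∈ Ioo b c ∧ ε < |y - x|}, f y / (x - y)) (𝓝[>] 0)
      (𝓝 (f x * (log (x - b) - log (c - x)) + ∫ y in Ioo b c, (f y - f x) / (x - y))) := by
  obtain ⟨hbx, hxc⟩ := hx
  refine ((tendsto_setIntegral_lt_abs_sub x hf).const_add _).congr' ?_
  filter_upwards [Ioo_mem_nhdsGT (lt_min (sub_pos.2 hbx) (sub_pos.2 hxc))] with ε ⟨hε, hεx⟩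
  have hsplit (y : ℝ) : f y / (x - y) = f x * (x - y)⁻¹ + (f y - f x) / (x - y) := by ring
  simp_rw [hsplit]
  rw [integral_add ((integrableOn_inv_sub_of_lt_abs_sub measure_Ioo_lt_top.ne hε).const_mul _)
      (hf.mono_set inter_subset_left), MeasureTheory.integral_const_mul,
    setIntegral_inv_sub_of_lt_abs_sub hε (by linarith [min_le_left (x - b) (c - x)])
      (by linarith [min_le_right (x - b) (c - x)])]

theorem integral_add_div_sq_add_sq {a : ℝ} (ha : a ≠ 0) (x r : ℝ) :
    ∫ y in -r..r, (x + y) / (a ^ 2 + y ^ 2) = 2 * x / a * arctan (r / a) := by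
  have hderiv (y : ℝ) : HasDerivAt (fun y => x / a * arctan (y / a) + log (a ^ 2 + y ^ 2) / 2)
      ((x + y) / (a ^ 2 + y ^ 2)) y := by
    have hpos : 0 < a ^ 2 + y ^ 2 := by positivity
    have harctan : HasDerivAt (fun y => arctan (y / a)) (1 / (1 + (y / a) ^ 2) * (1 / a)) y :=
      ((hasDerivAt_id' y).div_const a).arctan
    have hsq : HasDerivAt (fun y => a ^ 2 + y ^ 2) (2 * y) y := by
      simpa using (hasDerivAt_pow 2 y).const_add (a ^ 2)
    refine ((harctan.const_mul (x / a)).add ((hsq.log hpos.ne').div_const 2)).congr_deriv ?_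
    field_simp
  have hcont : Continuous fun y : ℝ => (x + y) / (a ^ 2 + y ^ 2) :=
    by fun_prop (disch := intro y; positivity)
  rw [integral_eq_sub_of_hasDerivAt (fun y _ => hderiv y) (hcont.intervalIntegrable _ _),
    neg_div, arctan_neg, neg_sq]
  ring

theorem lorentzian_slope_eq {a x y : ℝ} (ha : a ≠ 0) (hxy : y ≠ x) :
    (1 / (a ^ 2 + y ^ 2) - 1 / (a ^ 2 + x ^ 2)) / (x - y)
      = (x + y) / (a ^ 2 + y ^ 2) / (a ^ 2 + x ^ 2) := by
  have : x - y ≠ 0 := sub_ne_zero.2 hxy.symm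
  field_simp
  ring

/-- For `a > 0` and `x ∈ (−1,1)`, the principal value
`PV∫_{−1}^{1} (1/(a² + y²))·(1/(x−y)) dy` exists and equals
`(2x/a)·arctan(1/a)/(a² + x²) + log((1+x)/(1−x))/(a² + x²)`; equivalently, the
regularized integral `∫_{−1}^{1} (1/(a² + y²) − 1/(a² + x²))/(x−y) dy` equals
`(2x/a)·arctan(1/a)/(a² + x²)`. -/
theorem pv_lorentzian_finite_interval (a : ℝ) (ha : 0 < a) (x : ℝ)
    (hx : x ∈ Ioo (-1 : ℝ) 1) :
    Tendsto
      (fun ε : ℝ => ∫ y in {y : ℝ | y ∈ Ioo (-1 : ℝ) 1 ∧ ε < |y - x|},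
        (1 / (a ^ 2 + y ^ 2)) * (1 / (x - y)))
      (𝓝[>] 0)
      (𝓝 ((2 * x / a) * Real.arctan (1 / a) / (a ^ 2 + x ^ 2)
        + Real.log ((1 + x) / (1 - x)) / (a ^ 2 + x ^ 2)))
    ∧ (∫ y in Ioo (-1 : ℝ) 1, (1 / (a ^ 2 + y ^ 2) - 1 / (a ^ 2 + x ^ 2)) / (x - y))
        = (2 * x / a) * Real.arctan (1 / a) / (a ^ 2 + x ^ 2) := by
  have hslope : (fun y => (1 / (a ^ 2 + y ^ 2) - 1 / (a ^ 2 + x ^ 2)) / (x - y))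
      =ᵐ[volume] fun y => (x + y) / (a ^ 2 + y ^ 2) / (a ^ 2 + x ^ 2) := by
    filter_upwards [compl_mem_ae_iff.2 (measure_singleton x)] with y hy
    exact lorentzian_slope_eq ha.ne' hy
  have hcont : Continuous fun y : ℝ => (x + y) / (a ^ 2 + y ^ 2) / (a ^ 2 + x ^ 2) :=
    by fun_prop (disch := intro y; positivity)
  have hint : IntegrableOn (fun y => (1 / (a ^ 2 + y ^ 2) - 1 / (a ^ 2 + x ^ 2)) / (x - y))
      (Ioo (-1) 1) :=
    (hcont.integrableOn_Icc.mono_set Ioo_subset_Icc_self).congr_fun_ae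
      (ae_restrict_of_ae hslope.symm)
  have hreg : ∫ y in Ioo (-1 : ℝ) 1, (1 / (a ^ 2 + y ^ 2) - 1 / (a ^ 2 + x ^ 2)) / (x - y)
      = 2 * x / a * arctan (1 / a) / (a ^ 2 + x ^ 2) := by
    rw [integral_congr_ae (ae_restrict_of_ae hslope), ← integral_Ioc_eq_integral_Ioo,
      ← integral_of_le (by norm_num), intervalIntegral.integral_div,
      integral_add_div_sq_add_sq ha.ne']
  refine ⟨?_, hreg⟩
  have hpv :=
    tendsto_setIntegral_div_sub_of_lt_abs_sub (f := fun y => 1 / (a ^ 2 + y ^ 2)) hx hint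
  rw [hreg] at hpv
  convert hpv using 2
  · simp_rw [mul_one_div]
  · rw [log_div (by linarith [hx.1]) (by linarith [hx.2]), sub_neg_eq_add, add_comm 1 x]
    ring
end

section
/- Let a₁, a₂ > 0 and α ∈ ℝ, and define f : ℝ → ℝ by f(y) = 1/(a₁² + y²) for |y| ≤ 1 and f(y) = α/(a₂² + y²) for |y| > 1. Then for every x ∈ (−1,1), the principal value PV∫_ℝ f(y)/(x−y) dy exists and equals (2x/a₁)·arctan(1/a₁)/(a₁² + x²) + (2αx/a₂)·arctan(a₂)/(a₂² + x²) − (1/(a₁² + x²) − α/(a₂² + x²))·log((1−x)/(1+x)). -/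
/-!
With `C = a² + x²`, the partial fraction identity
`C / ((a² + y²)(x - y)) = (x + y) / (a² + y²) + 1 / (x - y)` gives the primitive
`F(y) = (x/a) arctan (y/a) + ½ log (a² + y²) - log |x - y|` of `C / ((a² + y²)(x - y))`
on each side of `x`. The excised integral is a sum of four pieces, two tails carrying the
weight `α` and two pieces of `[-1, 1] \ (x - ε, x + ε)` carrying the weight `1`, each evaluated
by this primitive, with `F(±∞) = ±(x/a)(π/2)`. The only `ε`-dependence is
`F(x - ε) - F(x + ε)`, in which the two singular terms `log ε` cancel.
-/

open MeasureTheory Filter Set Topology Real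

theorem setIntegral_lt_abs_sub {E : Type*} [NormedAddCommGroup E] [NormedSpace ℝ E]
    {f : ℝ → E} {x ε u v : ℝ} (hε : 0 ≤ ε) (hu : u ≤ x - ε) (hv : x + ε ≤ v)
    (hf_Iio : IntegrableOn f (Iio u)) (hf_left : IntervalIntegrable f volume u (x - ε))
    (hf_right : IntervalIntegrable f volume (x + ε) v) (hf_Ioi : IntegrableOn f (Ioi v)) :
    ∫ y in {y | ε < |y - x|}, f y
      = ((∫ y in Iio u, f y) + ∫ y in u..x - ε, f y)
        + ((∫ y in x + ε..v, f y) + ∫ y in Ioi v, f y) := by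
  have hset : {y | ε < |y - x|} = Iio (x - ε) ∪ Ioi (x + ε) := by
    ext y
    simp only [mem_ofPred_eq, mem_union, mem_Iio, mem_Ioi, lt_abs]
    constructor <;> rintro (h | h) <;> [right; left; right; left] <;> linarith
  have hf_lt : IntegrableOn f (Iio (x - ε)) := by
    rw [← Iio_union_Ico_eq_Iio hu]
    exact hf_Iio.union (((intervalIntegrable_iff_integrableOn_Icc_of_le hu).1 hf_left).mono_set
      Ico_subset_Icc_self)
  have hf_gt : IntegrableOn f (Ioi (x + ε)) := by
    rw [← Ioc_union_Ioi_eq_Ioi hv]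
    exact ((intervalIntegrable_iff_integrableOn_Ioc_of_le hv).1 hf_right).union hf_Ioi
  have h_disj : Disjoint (Iio (x - ε)) (Ioi (x + ε)) :=
    (Iic_disjoint_Ioi (by linarith)).mono_left Iio_subset_Iic_self
  rw [hset, setIntegral_union h_disj measurableSet_Ioi hf_lt hf_gt,
    ← intervalIntegral.integral_Iio_sub_Iio' hf_lt hf_Iio,
    intervalIntegral.integral_interval_add_Ioi' hf_right hf_Ioi]
  abel

/-- `Real.log` is even, so `log (x - y)` is `log |x - y|` on both sides of `x`. -/
noncomputable def lorentzianPrimitive (a x y : ℝ) : ℝ :=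
  x / a * arctan (y / a) + log (a ^ 2 + y ^ 2) / 2 - log (x - y)

section

variable {a x : ℝ}

theorem hasDerivAt_lorentzianPrimitive (c : ℝ) (ha : a ≠ 0) {y : ℝ} (hy : y ≠ x) :
    HasDerivAt (fun t => c / (a ^ 2 + x ^ 2) * lorentzianPrimitive a x t)
      (c / (a ^ 2 + y ^ 2) / (x - y)) y := by
  have hay : a ^ 2 + y ^ 2 ≠ 0 := by positivity
  have hax : a ^ 2 + x ^ 2 ≠ 0 := by positivity
  have hxy : x - y ≠ 0 := sub_ne_zero.2 hy.symm
  have h := ((((hasDerivAt_arctan (y / a)).comp y ((hasDerivAt_id y).div_const a)).const_mul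
    (x / a)).add (((hasDerivAt_log hay).comp y ((hasDerivAt_pow 2 y).const_add (a ^ 2))).div_const
    2) |>.sub ((hasDerivAt_log hxy).comp y ((hasDerivAt_id y).const_sub x))).const_mul
    (c / (a ^ 2 + x ^ 2))
  refine h.congr_deriv ?_
  simp only [Nat.cast_ofNat]
  field_simp
  ring

theorem tendsto_lorentzianPrimitive_sub_arctan_cocompact (a x : ℝ) :
    Tendsto (fun y => lorentzianPrimitive a x y - x / a * arctan (y / a)) (cocompact ℝ)
      (𝓝 0) := by
  -- in the variable `t = 1 / y` the remaining logarithms are continuous at `t = 0`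
  set g : ℝ → ℝ := fun t => log ((a ^ 2 * t ^ 2 + 1) / (x * t - 1) ^ 2) / 2
  have hg : Tendsto g (𝓝 0) (𝓝 0) := by
    have : ContinuousAt g 0 :=
      ((ContinuousAt.div (by fun_prop) (by fun_prop) (by norm_num)).log (by norm_num)).div_const 2
    simpa [g] using this.tendsto
  have hinv : Tendsto (fun y : ℝ => y⁻¹) (cocompact ℝ) (𝓝 0) :=
    Metric.cobounded_eq_cocompact (α := ℝ) ▸ tendsto_inv₀_cobounded
  refine (hg.comp hinv).congr' ?_
  filter_upwards [isCompact_singleton.compl_mem_cocompact (s := {0}),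
    isCompact_singleton.compl_mem_cocompact (s := {x})] with y (hy0 : y ≠ 0) (hyx : y ≠ x)
  have hay : a ^ 2 + y ^ 2 ≠ 0 := by positivity
  have hxy : x - y ≠ 0 := sub_ne_zero.2 (Ne.symm hyx)
  have hratio :
      (a ^ 2 * y⁻¹ ^ 2 + 1) / (x * y⁻¹ - 1) ^ 2 = (a ^ 2 + y ^ 2) / (x - y) ^ 2 := by
    field_simp
  simp only [Function.comp_apply, g, lorentzianPrimitive, hratio]
  rw [log_div hay (pow_ne_zero 2 hxy), log_pow]
  push_cast
  ring

theorem tendsto_lorentzianPrimitive_atTop (ha : 0 < a) (x : ℝ) :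
    Tendsto (lorentzianPrimitive a x) atTop (𝓝 (x / a * (π / 2))) := by
  have h := ((tendsto_nhds_of_tendsto_nhdsWithin tendsto_arctan_atTop).comp
    (tendsto_id.atTop_div_const ha)).const_mul (x / a) |>.add
    ((tendsto_lorentzianPrimitive_sub_arctan_cocompact a x).mono_left atTop_le_cocompact)
  simpa using h

theorem tendsto_lorentzianPrimitive_atBot (ha : 0 < a) (x : ℝ) :
    Tendsto (lorentzianPrimitive a x) atBot (𝓝 (-(x / a * (π / 2)))) := by
  have h := ((tendsto_nhds_of_tendsto_nhdsWithin tendsto_arctan_atBot).comp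
    (tendsto_id.atBot_div_const ha)).const_mul (x / a) |>.add
    ((tendsto_lorentzianPrimitive_sub_arctan_cocompact a x).mono_left atBot_le_cocompact)
  simpa using h

theorem tendsto_lorentzianPrimitive_sub_symm (ha : a ≠ 0) (x : ℝ) :
    Tendsto (fun ε => lorentzianPrimitive a x (x - ε) - lorentzianPrimitive a x (x + ε))
      (𝓝 0) (𝓝 0) := by
  set φ : ℝ → ℝ := fun y => x / a * arctan (y / a) + log (a ^ 2 + y ^ 2) / 2
  have hφ : Continuous φ := by
    have : ∀ y : ℝ, a ^ 2 + y ^ 2 ≠ 0 := fun y => by positivity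
    fun_prop (disch := exact this _)
  have h : Continuous fun ε => φ (x - ε) - φ (x + ε) := by fun_prop
  refine Tendsto.congr (fun ε => ?_) (by simpa using h.tendsto 0)
  simp only [lorentzianPrimitive, φ, sub_sub_cancel, sub_add_cancel_left, log_neg_eq_log]
  ring

theorem lorentzianPrimitive_one_sub_neg_one (a : ℝ) (h₁ : 1 - x ≠ 0) (h₂ : 1 + x ≠ 0) :
    lorentzianPrimitive a x 1 - lorentzianPrimitive a x (-1)
      = 2 * x / a * arctan (1 / a) - log ((1 - x) / (1 + x)) := by
  have : x - 1 = -(1 - x) := by ring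
  simp only [lorentzianPrimitive, neg_div, arctan_neg, neg_sq, sub_neg_eq_add, this,
    log_neg_eq_log, log_div h₁ h₂, add_comm x 1]
  ring

theorem continuousOn_lorentzian_div (c : ℝ) (ha : a ≠ 0) {s : Set ℝ} (hs : x ∉ s) :
    ContinuousOn (fun y => c / (a ^ 2 + y ^ 2) / (x - y)) s := by
  refine (continuousOn_const.div (by fun_prop) fun y _ => by positivity).div (by fun_prop) ?_
  rintro y hy
  exact sub_ne_zero.2 (ne_of_mem_of_not_mem hy hs).symm

theorem intervalIntegral_lorentzian_div (c : ℝ) (ha : a ≠ 0) {u v : ℝ} (h : x ∉ uIcc u v) :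
    ∫ y in u..v, c / (a ^ 2 + y ^ 2) / (x - y)
      = c / (a ^ 2 + x ^ 2) * (lorentzianPrimitive a x v - lorentzianPrimitive a x u) := by
  rw [intervalIntegral.integral_eq_sub_of_hasDerivAt
    (fun y hy => hasDerivAt_lorentzianPrimitive c ha (ne_of_mem_of_not_mem hy h))
    (continuousOn_lorentzian_div c ha h).intervalIntegrable, mul_sub]

theorem integrableOn_lorentzian_div (c : ℝ) (ha : a ≠ 0) {d : ℝ} (hd : 0 < d) {s : Set ℝ}
    (hs : MeasurableSet s) (h : ∀ y ∈ s, d ≤ |x - y|) :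
    IntegrableOn (fun y => c / (a ^ 2 + y ^ 2) / (x - y)) s := by
  have hx : x ∉ s := fun hx => by simpa using hd.trans_le (h x hx)
  refine Integrable.mono'
    ((integrable_inv_one_add_sq.comp_div ha).const_mul (|c| / (d * a ^ 2))).integrableOn
    ((continuousOn_lorentzian_div c ha hx).aestronglyMeasurable hs) ?_
  refine (ae_restrict_iff' hs).2 (Eventually.of_forall fun y hy => ?_)
  have hay : 0 < a ^ 2 + y ^ 2 := by positivity
  have hbound : |c| / (d * a ^ 2) * (1 + (y / a) ^ 2)⁻¹ = |c| / (a ^ 2 + y ^ 2) / d := by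
    field_simp
  rw [hbound, norm_div, norm_div, Real.norm_eq_abs, Real.norm_eq_abs, Real.norm_eq_abs,
    abs_of_pos hay]
  gcongr
  exact h y hy

theorem integral_Ioi_lorentzian_div (c : ℝ) (ha : 0 < a) {b : ℝ} (hb : x < b) :
    ∫ y in Ioi b, c / (a ^ 2 + y ^ 2) / (x - y)
      = c / (a ^ 2 + x ^ 2) * (x / a * (π / 2) - lorentzianPrimitive a x b) := by
  refine (integral_Ioi_of_hasDerivAt_of_tendsto'
    (fun y hy => hasDerivAt_lorentzianPrimitive c ha.ne' (hb.trans_le hy).ne')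
    (integrableOn_lorentzian_div c ha.ne' (sub_pos.2 hb) measurableSet_Ioi fun y hy => ?_)
    ((tendsto_lorentzianPrimitive_atTop ha x).const_mul _)).trans (mul_sub _ _ _).symm
  rw [abs_sub_comm, abs_of_pos (sub_pos.2 (hb.trans hy))]
  exact sub_le_sub_right hy.le x

theorem integral_Iio_lorentzian_div (c : ℝ) (ha : 0 < a) {b : ℝ} (hb : b < x) :
    ∫ y in Iio b, c / (a ^ 2 + y ^ 2) / (x - y)
      = c / (a ^ 2 + x ^ 2) * (lorentzianPrimitive a x b + x / a * (π / 2)) := by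
  rw [← integral_Iic_eq_integral_Iio, integral_Iic_of_hasDerivAt_of_tendsto'
    (fun y hy => hasDerivAt_lorentzianPrimitive c ha.ne' (hy.trans_lt hb).ne)
    (integrableOn_lorentzian_div c ha.ne' (sub_pos.2 hb) measurableSet_Iic fun y hy => ?_)
    ((tendsto_lorentzianPrimitive_atBot ha x).const_mul _)]
  · ring
  rw [abs_of_pos (sub_pos.2 (hy.trans_lt hb))]
  exact sub_le_sub_left hy x

end

theorem integral_lt_abs_sub_piecewise_lorentzian {a₁ a₂ α x ε : ℝ} (h₁ : 0 < a₁)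
    (h₂ : 0 < a₂) (hε : 0 < ε) (hl : -1 ≤ x - ε) (hr : x + ε ≤ 1) :
    ∫ y in {y | ε < |y - x|},
        (if |y| ≤ 1 then 1 / (a₁ ^ 2 + y ^ 2) else α / (a₂ ^ 2 + y ^ 2)) / (x - y)
      = 1 / (a₁ ^ 2 + x ^ 2)
          * ((lorentzianPrimitive a₁ x (x - ε) - lorentzianPrimitive a₁ x (x + ε))
            + (lorentzianPrimitive a₁ x 1 - lorentzianPrimitive a₁ x (-1)))
        + α / (a₂ ^ 2 + x ^ 2)
          * (x / a₂ * π - (lorentzianPrimitive a₂ x 1 - lorentzianPrimitive a₂ x (-1))) := by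
  set f : ℝ → ℝ := fun y =>
    (if |y| ≤ 1 then 1 / (a₁ ^ 2 + y ^ 2) else α / (a₂ ^ 2 + y ^ 2)) / (x - y)
  have h_inner : EqOn (fun y => 1 / (a₁ ^ 2 + y ^ 2) / (x - y)) f (Icc (-1) 1) :=
    fun y hy => by dsimp only [f]; rw [if_pos (abs_le.2 hy)]
  have h_outer : EqOn (fun y => α / (a₂ ^ 2 + y ^ 2) / (x - y)) f {y | 1 < |y|} :=
    fun y hy => by dsimp only [f]; rw [if_neg (not_le.2 hy)]
  have h_Iio : EqOn (fun y => α / (a₂ ^ 2 + y ^ 2) / (x - y)) f (Iio (-1)) :=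
    h_outer.mono fun y (hy : y < -1) => show 1 < |y| from lt_abs.2 (.inr (by linarith))
  have h_Ioi : EqOn (fun y => α / (a₂ ^ 2 + y ^ 2) / (x - y)) f (Ioi 1) :=
    h_outer.mono fun y (hy : 1 < y) => show 1 < |y| from lt_abs.2 (.inl hy)
  have h_left : EqOn (fun y => 1 / (a₁ ^ 2 + y ^ 2) / (x - y)) f (uIcc (-1) (x - ε)) :=
    h_inner.mono (by rw [uIcc_of_le hl]; exact Icc_subset_Icc le_rfl (by linarith))
  have h_right : EqOn (fun y => 1 / (a₁ ^ 2 + y ^ 2) / (x - y)) f (uIcc (x + ε) 1) :=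
    h_inner.mono (by rw [uIcc_of_le hr]; exact Icc_subset_Icc (by linarith) le_rfl)
  have hx_left : x ∉ uIcc (-1) (x - ε) := by
    rw [uIcc_of_le hl]; exact fun h => by linarith [h.2]
  have hx_right : x ∉ uIcc (x + ε) 1 := by
    rw [uIcc_of_le hr]; exact fun h => by linarith [h.1]
  have hf_Iio : IntegrableOn f (Iio (-1)) :=
    (integrableOn_lorentzian_div α h₂.ne' (d := 1 + x) (by linarith) measurableSet_Iio
      fun y (hy : y < -1) => by rw [abs_of_pos (by linarith)]; linarith).congr_fun h_Iio
      measurableSet_Iio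
  have hf_Ioi : IntegrableOn f (Ioi 1) :=
    (integrableOn_lorentzian_div α h₂.ne' (d := 1 - x) (by linarith) measurableSet_Ioi
      fun y (hy : 1 < y) => by rw [abs_sub_comm, abs_of_pos (by linarith)]; linarith).congr_fun
      h_Ioi measurableSet_Ioi
  rw [setIntegral_lt_abs_sub hε.le hl hr hf_Iio
    ((continuousOn_lorentzian_div 1 h₁.ne' hx_left).congr h_left.symm).intervalIntegrable
    ((continuousOn_lorentzian_div 1 h₁.ne' hx_right).congr h_right.symm).intervalIntegrable
    hf_Ioi,
    ← setIntegral_congr_fun measurableSet_Iio h_Iio,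
    ← setIntegral_congr_fun measurableSet_Ioi h_Ioi,
    ← intervalIntegral.integral_congr h_left, ← intervalIntegral.integral_congr h_right,
    integral_Iio_lorentzian_div α h₂ (by linarith),
    integral_Ioi_lorentzian_div α h₂ (by linarith),
    intervalIntegral_lorentzian_div 1 h₁.ne' hx_left,
    intervalIntegral_lorentzian_div 1 h₁.ne' hx_right]
  ring

/-- For the piecewise function `f(y) = 1/(a₁² + y²)` for `|y| ≤ 1` and
`f(y) = α/(a₂² + y²)` for `|y| > 1`, and every `x ∈ (−1,1)`, the principal value
`PV∫_ℝ f(y)/(x−y) dy` exists and equals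
`(2x/a₁)·arctan(1/a₁)/(a₁² + x²) + (2αx/a₂)·arctan(a₂)/(a₂² + x²)
  − (1/(a₁² + x²) − α/(a₂² + x²))·log((1−x)/(1+x))`. -/
theorem pv_piecewise_lorentzian (a₁ a₂ α : ℝ) (h₁ : 0 < a₁) (h₂ : 0 < a₂)
    (x : ℝ) (hx : x ∈ Ioo (-1 : ℝ) 1) :
    Tendsto
      (fun ε : ℝ => ∫ y in {y : ℝ | ε < |y - x|},
        (if |y| ≤ 1 then 1 / (a₁ ^ 2 + y ^ 2) else α / (a₂ ^ 2 + y ^ 2)) / (x - y))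
      (𝓝[>] 0)
      (𝓝 ((2 * x / a₁) * Real.arctan (1 / a₁) / (a₁ ^ 2 + x ^ 2)
        + (2 * α * x / a₂) * Real.arctan a₂ / (a₂ ^ 2 + x ^ 2)
        - (1 / (a₁ ^ 2 + x ^ 2) - α / (a₂ ^ 2 + x ^ 2))
          * Real.log ((1 - x) / (1 + x)))) := by
  have h_one_sub : 0 < 1 - x := sub_pos.2 hx.2
  have h_one_add : 0 < 1 + x := neg_lt_iff_pos_add'.1 hx.1
  have h_lim := ((((tendsto_lorentzianPrimitive_sub_symm h₁.ne' x).mono_left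
    (nhdsWithin_le_nhds (s := Ioi 0))).add_const
      (lorentzianPrimitive a₁ x 1 - lorentzianPrimitive a₁ x (-1))).const_mul
      (1 / (a₁ ^ 2 + x ^ 2))).add_const (α / (a₂ ^ 2 + x ^ 2)
      * (x / a₂ * π - (lorentzianPrimitive a₂ x 1 - lorentzianPrimitive a₂ x (-1))))
  convert h_lim.congr' ?_ using 2
  · rw [zero_add, lorentzianPrimitive_one_sub_neg_one _ h_one_sub.ne' h_one_add.ne',
      lorentzianPrimitive_one_sub_neg_one _ h_one_sub.ne' h_one_add.ne', one_div a₂,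
      arctan_inv_of_pos h₂]
    field_simp
    ring
  filter_upwards [Ioo_mem_nhdsGT (lt_min h_one_sub h_one_add)] with ε ⟨hε, hεδ⟩
  obtain ⟨hε_sub, hε_add⟩ := lt_min_iff.1 hεδ
  exact (integral_lt_abs_sub_piecewise_lorentzian h₁ h₂ hε (by linarith) (by linarith)).symm
end

section
/- Let a₁, a₂ > 0 and α ∈ ℝ with 1/(a₁² + 1) − α/(a₂² + 1) ≠ 0, and define f : ℝ → ℝ by f(y) = 1/(a₁² + y²) for |y| ≤ 1 and f(y) = α/(a₂² + y²) for |y| > 1 (so f is discontinuous at y = 1). Then the principal value h(x) := PV∫_ℝ f(y)/(x−y) dy (which exists for every x ∈ (−1,1)) satisfies |h(x)| → ∞ as x → 1⁻; i.e., the Hilbert-transform integral of a function with a jump discontinuity diverges logarithmically at the jump. -/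
/-!
Away from `y = x` each piece of the integrand has the form `c / (a² + y²) / (x - y)`, with the
explicit primitive `((x / a) arctan (y / a) + log (a² + y²) / 2 - log |x - y|) / (a² + x²)`,
which has finite limits at `±∞`. Splitting the truncated integral at `±1` and `x ± ε`, the terms
`log ε` coming from `x ± ε` cancel, so the principal value exists. The cut points `±1` contribute
`(1 / (a₁² + x²) - α / (a₂² + x²)) log ((1 + x) / (1 - x))` plus a function continuous at `x = 1`;
at `x = 1` the coefficient is the jump of `f`, so the principal value blows up as `x → 1⁻`.
-/

open MeasureTheory Filter Set Topology Real

theorem integrable_one_div_sq_add_sq {a : ℝ} (ha : a ≠ 0) :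
    Integrable fun y : ℝ => 1 / (a ^ 2 + y ^ 2) := by
  refine ((integrable_inv_one_add_sq.comp_div ha).const_mul (a ^ 2)⁻¹).congr
    (Eventually.of_forall fun y => ?_)
  field_simp

theorem integrableOn_div_sub {g : ℝ → ℝ} (hg : Integrable g) {x δ : ℝ} (hδ : 0 < δ) :
    IntegrableOn (fun y => g y / (x - y)) {y | δ ≤ |y - x|} := by
  refine ((hg.norm.const_mul δ⁻¹).integrableOn).mono'
    (hg.aestronglyMeasurable.div₀ (by fun_prop)).restrict ?_
  filter_upwards [ae_restrict_mem (measurableSet_le measurable_const (by fun_prop))] with y hy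
  rw [norm_div, Real.norm_eq_abs (x - y), abs_sub_comm, div_eq_inv_mul]
  exact mul_le_mul_of_nonneg_right (inv_anti₀ hδ hy) (norm_nonneg _)

theorem setIntegral_lt_abs_sub_eq {f : ℝ → ℝ} {x ε b c : ℝ}
    (hf : IntegrableOn f {y | ε < |y - x|}) (hε : 0 ≤ ε) (hb : b ≤ x - ε) (hc : x + ε ≤ c) :
    ∫ y in {y | ε < |y - x|}, f y
      = (∫ y in Iio b, f y) + (∫ y in b..x - ε, f y)
        + ((∫ y in x + ε..c, f y) + ∫ y in Ioi c, f y) := by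
  have hsplit : {y | ε < |y - x|} = Iio (x - ε) ∪ Ioi (x + ε) := by
    ext y
    simp only [mem_ofPred_eq, mem_union, mem_Iio, mem_Ioi, lt_abs]
    constructor <;> rintro (h | h) <;> [right; left; right; left] <;> linarith
  have hleft : IntegrableOn f (Iio (x - ε)) := hf.mono_set (hsplit ▸ subset_union_left)
  have hright : IntegrableOn f (Ioi (x + ε)) := hf.mono_set (hsplit ▸ subset_union_right)
  rw [hsplit, setIntegral_union ((Iic_disjoint_Ioi (by linarith)).mono_left Iio_subset_Iic_self)
      measurableSet_Ioi hleft hright,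
    eq_add_of_sub_eq' (intervalIntegral.integral_Iio_sub_Iio' hleft
      (hleft.mono_set (Iio_subset_Iio hb))),
    ← intervalIntegral.integral_interval_add_Ioi hright (hright.mono_set (Ioi_subset_Ioi hc))]

theorem tendsto_abs_mul_add_atTop {ι : Type*} {l : Filter ι} {c L R : ι → ℝ} {c₀ r : ℝ}
    (hc : Tendsto c l (𝓝 c₀)) (hc₀ : c₀ ≠ 0) (hL : Tendsto L l atTop) (hR : Tendsto R l (𝓝 r)) :
    Tendsto (fun t => |c t * L t + R t|) l atTop := by
  have hlow : Tendsto (fun t => |c t| * L t - |R t|) l atTop :=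
    (hc.abs.pos_mul_atTop (abs_pos.2 hc₀) hL).atTop_add hR.abs.neg
  refine tendsto_atTop_mono (fun t => ?_) hlow
  have := abs_add_le (c t * L t + R t) (-R t)
  rw [add_neg_cancel_right, abs_neg, abs_mul] at this
  nlinarith [le_abs_self (L t), abs_nonneg (c t)]

theorem tendsto_log_one_add_sub_log_one_sub :
    Tendsto (fun x => log (1 + x) - log (1 - x)) (𝓝[<] 1) atTop := by
  have hgap : Tendsto (fun x : ℝ => 1 - x) (𝓝[<] 1) (𝓝[>] 0) := by
    refine tendsto_nhdsWithin_of_tendsto_nhds_of_eventually_within _ ?_ ?_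
    · exact ((continuous_sub_left 1).tendsto' 1 0 (sub_self 1)).mono_left nhdsWithin_le_nhds
    · filter_upwards [self_mem_nhdsWithin] with x hx using sub_pos.2 (mem_Iio.1 hx)
  have hsing := tendsto_neg_atBot_atTop.comp (tendsto_log_nhdsGT_zero.comp hgap)
  have hreg : Tendsto (fun x : ℝ => log (1 + x)) (𝓝[<] 1) (𝓝 (log (1 + 1))) :=
    ((continuousAt_log (by norm_num)).comp (by fun_prop)).tendsto.mono_left nhdsWithin_le_nhds
  refine (hsing.atTop_add hreg).congr fun x => ?_
  simp only [Function.comp_apply]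
  ring

namespace LorentzHilbert

variable {a x : ℝ}

noncomputable def regular (a x y : ℝ) : ℝ :=
  x / a * arctan (y / a) + log (a ^ 2 + y ^ 2) / 2

/-- A primitive of `y ↦ 1 / (a ^ 2 + y ^ 2) / (x - y)` on both sides of `x`: `log (x - y)` is
`log |x - y|` under Mathlib's convention for `Real.log`. -/
noncomputable def primitive (a x y : ℝ) : ℝ :=
  (regular a x y - log (x - y)) / (a ^ 2 + x ^ 2)

theorem continuous_regular (ha : a ≠ 0) : Continuous (regular a x) := by
  unfold regular
  fun_prop (disch := intro; positivity)

theorem hasDerivAt_primitive (ha : a ≠ 0) {y : ℝ} (hy : y ≠ x) :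
    HasDerivAt (primitive a x) (1 / (a ^ 2 + y ^ 2) / (x - y)) y := by
  have hay : a ^ 2 + y ^ 2 ≠ 0 := by positivity
  have hax : a ^ 2 + x ^ 2 ≠ 0 := by positivity
  have hxy : x - y ≠ 0 := sub_ne_zero.2 hy.symm
  have h := ((((hasDerivAt_id y).div_const a).arctan.const_mul (x / a)).add
    ((((hasDerivAt_id y).pow 2).const_add (a ^ 2)).log hay |>.div_const 2)).sub
    (((hasDerivAt_id y).const_sub x).log hxy) |>.div_const (a ^ 2 + x ^ 2)
  refine h.congr_deriv ?_
  simp only [id, Pi.pow_apply]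
  field_simp
  ring

theorem primitive_sub_sub_primitive_add (ε : ℝ) :
    primitive a x (x - ε) - primitive a x (x + ε)
      = (regular a x (x - ε) - regular a x (x + ε)) / (a ^ 2 + x ^ 2) := by
  simp only [primitive, sub_sub_cancel, sub_add_cancel_left, log_neg_eq_log]
  ring

theorem primitive_one_sub_primitive_neg_one :
    primitive a x 1 - primitive a x (-1)
      = (2 * x / a * arctan (1 / a) + (log (1 + x) - log (1 - x))) / (a ^ 2 + x ^ 2) := by
  have h1 : x - 1 = -(1 - x) := by ring
  simp only [primitive, regular, h1, log_neg_eq_log, neg_div, arctan_neg, sub_neg_eq_add, neg_sq]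
  ring_nf

theorem tendsto_log_sub_log_cobounded (ha : a ≠ 0) :
    Tendsto (fun y => log (a ^ 2 + y ^ 2) / 2 - log (x - y)) (Bornology.cobounded ℝ) (𝓝 0) := by
  -- in the variable `t = y⁻¹` the difference is `log (((a t)² + 1) / (x t - 1)²) / 2`
  have hcont : ContinuousAt (fun t : ℝ => log (((a * t) ^ 2 + 1) / (x * t - 1) ^ 2) / 2) 0 := by
    have : ((0 : ℝ) - 1) ^ 2 ≠ 0 := by norm_num
    fun_prop (disch := simp)
  have hlim := hcont.tendsto.comp tendsto_inv₀_cobounded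
  simp only [mul_zero, zero_pow two_ne_zero, zero_add, zero_sub, neg_one_sq, div_one, log_one,
    zero_div] at hlim
  refine hlim.congr' ?_
  filter_upwards [Bornology.eventually_ne_cobounded 0, Bornology.eventually_ne_cobounded x]
    with y hy0 hyx
  have hxy : x - y ≠ 0 := sub_ne_zero.2 hyx.symm
  have hay : a ^ 2 + y ^ 2 ≠ 0 := by positivity
  have key : ((a * y⁻¹) ^ 2 + 1) / (x * y⁻¹ - 1) ^ 2 = (a ^ 2 + y ^ 2) / (x - y) ^ 2 := by
    field_simp
  rw [Function.comp_apply, key, log_div hay (pow_ne_zero 2 hxy), log_pow]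
  push_cast
  ring

theorem tendsto_primitive_atTop (ha : 0 < a) :
    Tendsto (primitive a x) atTop (𝓝 (x / a * (π / 2) / (a ^ 2 + x ^ 2))) := by
  have harctan : Tendsto (fun y => arctan (y / a)) atTop (𝓝 (π / 2)) :=
    (tendsto_arctan_atTop.mono_right nhdsWithin_le_nhds).comp (tendsto_id.atTop_div_const ha)
  have hlog := (tendsto_log_sub_log_cobounded (x := x) ha.ne').mono_left
    IsOrderBornology.atTop_le_cobounded
  have := ((harctan.const_mul (x / a)).add hlog).div_const (a ^ 2 + x ^ 2)
  rw [add_zero] at this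
  refine this.congr fun y => ?_
  simp only [primitive, regular]
  ring

theorem tendsto_primitive_atBot (ha : 0 < a) :
    Tendsto (primitive a x) atBot (𝓝 (-(x / a * (π / 2) / (a ^ 2 + x ^ 2)))) := by
  have harctan : Tendsto (fun y => arctan (y / a)) atBot (𝓝 (-(π / 2))) :=
    (tendsto_arctan_atBot.mono_right nhdsWithin_le_nhds).comp (tendsto_id.atBot_div_const ha)
  have hlog := (tendsto_log_sub_log_cobounded (x := x) ha.ne').mono_left
    IsOrderBornology.atBot_le_cobounded
  have := ((harctan.const_mul (x / a)).add hlog).div_const (a ^ 2 + x ^ 2)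
  rw [add_zero, mul_neg, neg_div] at this
  refine this.congr fun y => ?_
  simp only [primitive, regular]
  ring

theorem integral_Ioi_eq (ha : 0 < a) {b : ℝ} (hb : x < b) :
    ∫ y in Ioi b, 1 / (a ^ 2 + y ^ 2) / (x - y)
      = x / a * (π / 2) / (a ^ 2 + x ^ 2) - primitive a x b :=
  integral_Ioi_of_hasDerivAt_of_tendsto'
    (fun y hy => hasDerivAt_primitive ha.ne' (hb.trans_le hy).ne')
    ((integrableOn_div_sub (integrable_one_div_sq_add_sq ha.ne') (sub_pos.2 hb)).mono_set
      fun y (hy : b < y) => by rw [mem_ofPred_eq, abs_of_pos (by linarith)]; linarith)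
    (tendsto_primitive_atTop ha)

theorem integral_Iio_eq (ha : 0 < a) {b : ℝ} (hb : b < x) :
    ∫ y in Iio b, 1 / (a ^ 2 + y ^ 2) / (x - y)
      = primitive a x b + x / a * (π / 2) / (a ^ 2 + x ^ 2) := by
  have hint : IntegrableOn (fun y => 1 / (a ^ 2 + y ^ 2) / (x - y)) (Iic b) :=
    (integrableOn_div_sub (integrable_one_div_sq_add_sq ha.ne') (sub_pos.2 hb)).mono_set
      fun y (hy : y ≤ b) => by rw [mem_ofPred_eq, abs_of_neg (by linarith)]; linarith
  rw [← integral_Iic_eq_integral_Iio, integral_Iic_of_hasDerivAt_of_tendsto'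
    (fun y hy => hasDerivAt_primitive ha.ne' (lt_of_le_of_lt hy hb).ne) hint
    (tendsto_primitive_atBot ha), sub_neg_eq_add]

theorem intervalIntegral_eq (ha : a ≠ 0) {b c : ℝ} (hx : x ∉ uIcc b c) :
    ∫ y in b..c, 1 / (a ^ 2 + y ^ 2) / (x - y) = primitive a x c - primitive a x b := by
  have hne : ∀ y ∈ uIcc b c, y ≠ x := fun y hy h => hx (h ▸ hy)
  refine intervalIntegral.integral_eq_sub_of_hasDerivAt
    (fun y hy => hasDerivAt_primitive ha (hne y hy)) (ContinuousOn.intervalIntegrable ?_)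
  have : ∀ y, a ^ 2 + y ^ 2 ≠ 0 := fun y => by positivity
  exact (continuous_const.div (by fun_prop) this).continuousOn.div (by fun_prop)
    fun y hy => sub_ne_zero.2 (hne y hy).symm

end LorentzHilbert

noncomputable def profile (a₁ a₂ α y : ℝ) : ℝ :=
  if |y| ≤ 1 then 1 / (a₁ ^ 2 + y ^ 2) else α / (a₂ ^ 2 + y ^ 2)

noncomputable def pvValue (a₁ a₂ α x : ℝ) : ℝ :=
  (1 / (a₁ ^ 2 + x ^ 2) - α / (a₂ ^ 2 + x ^ 2)) * (log (1 + x) - log (1 - x))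
    + (2 * x / a₁ * arctan (1 / a₁) / (a₁ ^ 2 + x ^ 2)
      + α * (x / a₂ * (π - 2 * arctan (1 / a₂))) / (a₂ ^ 2 + x ^ 2))

section PrincipalValue

open LorentzHilbert

variable {a₁ a₂ α x ε : ℝ}

theorem profile_of_abs_le {y : ℝ} (hy : |y| ≤ 1) : profile a₁ a₂ α y = 1 / (a₁ ^ 2 + y ^ 2) :=
  if_pos hy

theorem profile_of_one_lt_abs {y : ℝ} (hy : 1 < |y|) :
    profile a₁ a₂ α y = α * (1 / (a₂ ^ 2 + y ^ 2)) := by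
  rw [profile, if_neg hy.not_ge, mul_one_div]

theorem integrable_profile (h₁ : a₁ ≠ 0) (h₂ : a₂ ≠ 0) : Integrable (profile a₁ a₂ α) :=
  Integrable.piecewise (s := {y : ℝ | |y| ≤ 1}) (measurableSet_le (by fun_prop) (by fun_prop))
    (integrable_one_div_sq_add_sq h₁).integrableOn
    (((integrable_one_div_sq_add_sq h₂).const_mul α).congr
      (Eventually.of_forall fun y => mul_one_div α _)).integrableOn

theorem integral_profile_truncated (h₁ : 0 < a₁) (h₂ : 0 < a₂) (hε : 0 < ε)
    (hl : -1 ≤ x - ε) (hr : x + ε ≤ 1) :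
    ∫ y in {y | ε < |y - x|}, profile a₁ a₂ α y / (x - y)
      = pvValue a₁ a₂ α x + (regular a₁ x (x - ε) - regular a₁ x (x + ε)) / (a₁ ^ 2 + x ^ 2) := by
  have hint := (integrableOn_div_sub (x := x) (integrable_profile (α := α) h₁.ne' h₂.ne')
    hε).mono_set fun _ hy => le_of_lt (show ε < _ from hy)
  have h_left_tail : ∫ y in Iio (-1), profile a₁ a₂ α y / (x - y)
      = α * (primitive a₂ x (-1) + x / a₂ * (π / 2) / (a₂ ^ 2 + x ^ 2)) := by
    rw [← integral_Iio_eq h₂ (by linarith), ← integral_const_mul]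
    refine setIntegral_congr_fun measurableSet_Iio fun y (hy : y < -1) => ?_
    rw [profile_of_one_lt_abs (by rw [abs_of_neg (by linarith)]; linarith), mul_div_assoc]
  have h_right_tail : ∫ y in Ioi 1, profile a₁ a₂ α y / (x - y)
      = α * (x / a₂ * (π / 2) / (a₂ ^ 2 + x ^ 2) - primitive a₂ x 1) := by
    rw [← integral_Ioi_eq h₂ (by linarith), ← integral_const_mul]
    refine setIntegral_congr_fun measurableSet_Ioi fun y (hy : 1 < y) => ?_
    rw [profile_of_one_lt_abs (by rw [abs_of_pos (by linarith)]; exact hy), mul_div_assoc]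
  have h_left_core : ∫ y in -1..x - ε, profile a₁ a₂ α y / (x - y)
      = primitive a₁ x (x - ε) - primitive a₁ x (-1) := by
    rw [← intervalIntegral_eq h₁.ne' (by rw [uIcc_of_le hl]; exact fun h => by linarith [h.2])]
    refine intervalIntegral.integral_congr fun y hy => ?_
    rw [uIcc_of_le hl] at hy
    rw [profile_of_abs_le (abs_le.2 ⟨hy.1, by linarith [hy.2]⟩)]
  have h_right_core : ∫ y in x + ε..1, profile a₁ a₂ α y / (x - y)
      = primitive a₁ x 1 - primitive a₁ x (x + ε) := by
    rw [← intervalIntegral_eq h₁.ne' (by rw [uIcc_of_le hr]; exact fun h => by linarith [h.1])]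
    refine intervalIntegral.integral_congr fun y hy => ?_
    rw [uIcc_of_le hr] at hy
    rw [profile_of_abs_le (abs_le.2 ⟨by linarith [hy.1], hy.2⟩)]
  rw [setIntegral_lt_abs_sub_eq hint hε.le hl hr, h_left_tail, h_left_core, h_right_core,
    h_right_tail, pvValue]
  linear_combination primitive_sub_sub_primitive_add (a := a₁) (x := x) ε
    + primitive_one_sub_primitive_neg_one (a := a₁) (x := x)
    - α * primitive_one_sub_primitive_neg_one (a := a₂) (x := x)

theorem tendsto_integral_profile_truncated (h₁ : 0 < a₁) (h₂ : 0 < a₂) (hx : x ∈ Ioo (-1) 1) :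
    Tendsto (fun ε => ∫ y in {y | ε < |y - x|}, profile a₁ a₂ α y / (x - y))
      (𝓝[>] 0) (𝓝 (pvValue a₁ a₂ α x)) := by
  have hreg : Continuous fun ε =>
      pvValue a₁ a₂ α x + (regular a₁ x (x - ε) - regular a₁ x (x + ε)) / (a₁ ^ 2 + x ^ 2) := by
    have := continuous_regular (x := x) h₁.ne'
    fun_prop
  have hlim := (hreg.tendsto 0).mono_left (nhdsWithin_le_nhds (s := Ioi 0))
  simp only [sub_zero, add_zero, sub_self, zero_div] at hlim
  refine hlim.congr' ?_
  filter_upwards [Ioo_mem_nhdsGT (lt_min (neg_lt_iff_pos_add.1 hx.1) (sub_pos.2 hx.2))]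
    with ε ⟨hε, hεx⟩
  exact (integral_profile_truncated h₁ h₂ hε (by linarith [min_le_left (x + 1) (1 - x)])
    (by linarith [min_le_right (x + 1) (1 - x)])).symm

end PrincipalValue

theorem tendsto_abs_pvValue {a₁ a₂ α : ℝ} (h₁ : a₁ ≠ 0) (h₂ : a₂ ≠ 0)
    (hjump : 1 / (a₁ ^ 2 + 1) - α / (a₂ ^ 2 + 1) ≠ 0) :
    Tendsto (fun x => |pvValue a₁ a₂ α x|) (𝓝[<] 1) atTop := by
  have hjump_lim : Tendsto (fun x : ℝ => 1 / (a₁ ^ 2 + x ^ 2) - α / (a₂ ^ 2 + x ^ 2)) (𝓝[<] 1)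
      (𝓝 (1 / (a₁ ^ 2 + 1) - α / (a₂ ^ 2 + 1))) := by
    have : ContinuousAt (fun x : ℝ => 1 / (a₁ ^ 2 + x ^ 2) - α / (a₂ ^ 2 + x ^ 2)) 1 := by
      fun_prop (disch := positivity)
    simpa using this.tendsto.mono_left nhdsWithin_le_nhds
  have hrest : ContinuousAt (fun x : ℝ => 2 * x / a₁ * arctan (1 / a₁) / (a₁ ^ 2 + x ^ 2)
      + α * (x / a₂ * (π - 2 * arctan (1 / a₂))) / (a₂ ^ 2 + x ^ 2)) 1 := by
    fun_prop (disch := positivity)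
  exact tendsto_abs_mul_add_atTop hjump_lim hjump tendsto_log_one_add_sub_log_one_sub
    (hrest.tendsto.mono_left nhdsWithin_le_nhds)

/-- If `1/(a₁² + 1) − α/(a₂² + 1) ≠ 0` (so the piecewise function `f`
has a jump at `y = 1`), the principal value `h(x) = PV∫_ℝ f(y)/(x−y) dy` exists for
every `x ∈ (−1,1)` and `|h(x)| → ∞` as `x → 1⁻`. -/
theorem pv_discontinuous_piecewise_blowup (a₁ a₂ α : ℝ) (h₁ : 0 < a₁) (h₂ : 0 < a₂)
    (hjump : 1 / (a₁ ^ 2 + 1) - α / (a₂ ^ 2 + 1) ≠ 0) :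
    ∃ h : ℝ → ℝ,
      (∀ x ∈ Ioo (-1 : ℝ) 1,
        Tendsto
          (fun ε : ℝ => ∫ y in {y : ℝ | ε < |y - x|},
            (if |y| ≤ 1 then 1 / (a₁ ^ 2 + y ^ 2) else α / (a₂ ^ 2 + y ^ 2)) / (x - y))
          (𝓝[>] 0) (𝓝 (h x)))
      ∧ Tendsto (fun x => |h x|) (𝓝[<] (1 : ℝ)) atTop :=
  ⟨pvValue a₁ a₂ α, fun _ hx => tendsto_integral_profile_truncated h₁ h₂ hx,
    tendsto_abs_pvValue h₁.ne' h₂.ne' hjump⟩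
end

section
/- For every x ∈ ℝ with x ≠ 0, the principal value PV∫_ℝ e^{−|y|}/(x−y) dy exists and equals sgn(x)·(e^{|x|}·E₁(|x|) + e^{−|x|}·Ei(|x|)), where E₁ and Ei are the exponential integrals. -/
/-!
The substitution `y = x - t` turns the truncated integral into `∫_{|t|>ε} e^{-|x-t|}/t dt`,
which is odd in `x`, so it suffices to take `x = a > 0`. Splitting at `-ε`, `ε` and `a`, the
pieces are `e^{-a} ∫_{-∞}^{-ε} e^t/t`, `e^{-a} ∫_ε^a e^t/t` and `e^a ∫_a^∞ e^{-t}/t`, and the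
first two add up to `e^{-a}` times the truncation of `Ei(a)`. That truncation converges as
`ε → 0⁺` because it equals `∫_ε^a (e^t - e^{-t})/t dt - E₁(a)`, and `(e^t - e^{-t})/t` is the
difference quotient at `0` of a smooth function, hence extends continuously to `t = 0`.
-/

open MeasureTheory Filter Set Topology Real

lemma integrable_exp_neg_abs : Integrable (fun y : ℝ => exp (-|y|)) := by
  refine Integrable.of_integral_ne_zero ?_
  rw [integral_comp_abs (f := fun t => exp (-t)), integral_exp_neg_Ioi_zero]
  norm_num

lemma IntegrableOn.div_self_of_le_abs {g : ℝ → ℝ} {s : Set ℝ} {ε : ℝ}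
    (hg : IntegrableOn g s) (hs : MeasurableSet s) (hε : 0 < ε) (h : ∀ t ∈ s, ε ≤ |t|) :
    IntegrableOn (fun t => g t / t) s := by
  simp_rw [div_eq_mul_inv]
  refine hg.mul_bdd (c := ε⁻¹) measurable_inv.aestronglyMeasurable ?_
  filter_upwards [ae_restrict_mem hs] with t ht
  rw [norm_inv, Real.norm_eq_abs]
  exact inv_anti₀ hε (h t ht)

lemma integrableOn_exp_neg_div_self_Ioi {ε : ℝ} (hε : 0 < ε) :
    IntegrableOn (fun t => exp (-t) / t) (Ioi ε) := by
  refine IntegrableOn.div_self_of_le_abs ?_ measurableSet_Ioi hε fun t ht => ?_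
  · simpa using exp_neg_integrableOn_Ioi ε one_pos
  · exact (abs_of_pos (hε.trans ht)).symm ▸ ht.le

lemma setIntegral_div_sub_eq (f : ℝ → ℝ) (x ε : ℝ) :
    ∫ y in {y : ℝ | ε < |y - x|}, f y / (x - y)
      = ∫ t in {t : ℝ | ε < |t|}, f (x - t) / t := by
  have hpre : (fun t => x - t) ⁻¹' {y : ℝ | ε < |y - x|} = {t : ℝ | ε < |t|} := by
    ext t; simp [abs_sub_comm]
  rw [← (Measure.measurePreserving_sub_left volume x).setIntegral_preimage_emb
    (Homeomorph.subLeft x).measurableEmbedding, hpre]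
  simp only [sub_sub_cancel]

lemma setIntegral_abs_gt_comp_neg_div_self (g : ℝ → ℝ) (ε : ℝ) :
    ∫ t in {t : ℝ | ε < |t|}, g (-t) / t = -∫ t in {t : ℝ | ε < |t|}, g t / t := by
  have hpre : Neg.neg ⁻¹' {t : ℝ | ε < |t|} = {t : ℝ | ε < |t|} := by
    ext t; simp
  rw [← (Measure.measurePreserving_neg volume).setIntegral_preimage_emb measurableEmbedding_neg,
    hpre, ← integral_neg]
  simp only [neg_neg, div_neg]

lemma integral_Iio_exp_div_self (ε : ℝ) :
    ∫ t in Iio (-ε), exp t / t = -∫ t in Ioi ε, exp (-t) / t := by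
  rw [← integral_Iic_eq_integral_Iio, ← integral_comp_neg_Ioi, ← integral_neg]
  simp only [div_neg]

lemma intervalIntegral_exp_neg_div_self_neg (a ε : ℝ) :
    ∫ t in (-a)..(-ε), exp (-t) / t = -∫ t in ε..a, exp t / t := by
  rw [← intervalIntegral.integral_comp_neg, ← intervalIntegral.integral_neg]
  simp only [neg_neg, div_neg]

noncomputable def eiTrunc (a ε : ℝ) : ℝ :=
  -((∫ t in (-a)..(-ε), exp (-t) / t) + ∫ t in Ioi ε, exp (-t) / t)

lemma intervalIntegrable_div_self {f : ℝ → ℝ} (hf : Continuous f) {a b : ℝ} (ha : 0 < a)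
    (hb : 0 < b) : IntervalIntegrable (fun t => f t / t) volume a b :=
  (hf.continuousOn.div continuousOn_id fun _ ht => (lt_of_lt_of_le (lt_min ha hb) ht.1).ne')
    |>.intervalIntegrable

lemma eiTrunc_eq_integral_dslope {a ε : ℝ} (ha : 0 < a) (hε : 0 < ε) :
    eiTrunc a ε = (∫ t in ε..a, dslope (fun t => exp t - exp (-t)) 0 t)
      - ∫ t in Ioi a, exp (-t) / t := by
  have hdslope : ∫ t in ε..a, dslope (fun t => exp t - exp (-t)) 0 t
      = (∫ t in ε..a, exp t / t) - ∫ t in ε..a, exp (-t) / t := by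
    rw [← intervalIntegral.integral_sub (intervalIntegrable_div_self (by fun_prop) hε ha)
      (intervalIntegrable_div_self (by fun_prop) hε ha)]
    refine intervalIntegral.integral_congr fun t ht => ?_
    have ht0 : t ≠ 0 := (lt_of_lt_of_le (lt_min hε ha) ht.1).ne'
    simp [dslope_of_ne _ ht0, slope_def_field, sub_div]
  rw [eiTrunc, hdslope, intervalIntegral_exp_neg_div_self_neg,
    ← intervalIntegral.integral_interval_add_Ioi (b := a) (integrableOn_exp_neg_div_self_Ioi hε)
      (integrableOn_exp_neg_div_self_Ioi ha)]
  ring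

lemma tendsto_eiTrunc {a : ℝ} (ha : 0 < a) :
    Tendsto (eiTrunc a) (𝓝[>] 0)
      (𝓝 ((∫ t in (0 : ℝ)..a, dslope (fun t => exp t - exp (-t)) 0 t)
        - ∫ t in Ioi a, exp (-t) / t)) := by
  have hcont : Continuous (dslope (fun t => exp t - exp (-t)) 0) :=
    continuousOn_univ.1 <| (continuousOn_dslope univ_mem).2 ⟨by fun_prop, by fun_prop⟩
  have hprim : Continuous fun ε => ∫ t in ε..a, dslope (fun t => exp t - exp (-t)) 0 t := by
    simp_rw [intervalIntegral.integral_symm a]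
    exact (intervalIntegral.continuous_primitive (fun _ _ => hcont.intervalIntegrable _ _) a).neg
  refine ((hprim.tendsto 0).mono_left nhdsWithin_le_nhds |>.sub_const _).congr' ?_
  filter_upwards [self_mem_nhdsWithin] with ε hε
  exact (eiTrunc_eq_integral_dslope ha hε).symm

lemma exp_neg_abs_sub_of_le {a t : ℝ} (h : t ≤ a) : exp (-|a - t|) = exp (-a) * exp t := by
  rw [abs_of_nonneg (sub_nonneg.2 h), ← exp_add]; ring_nf

lemma exp_neg_abs_sub_of_ge {a t : ℝ} (h : a ≤ t) : exp (-|a - t|) = exp a * exp (-t) := by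
  rw [abs_sub_comm, abs_of_nonneg (sub_nonneg.2 h), ← exp_add]; ring_nf

lemma setIntegral_exp_neg_abs_sub_div_self {a ε : ℝ} (hε : 0 < ε) (hεa : ε ≤ a) :
    ∫ t in {t : ℝ | ε < |t|}, exp (-|a - t|) / t
      = exp a * (∫ t in Ioi a, exp (-t) / t) + exp (-a) * eiTrunc a ε := by
  have hint {s : Set ℝ} (hs : MeasurableSet s) (h : ∀ t ∈ s, ε ≤ |t|) :
      IntegrableOn (fun t => exp (-|a - t|) / t) s :=
    IntegrableOn.div_self_of_le_abs (integrable_exp_neg_abs.comp_sub_left a).integrableOn hs hε h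
  have hIio : IntegrableOn (fun t => exp (-|a - t|) / t) (Iio (-ε)) :=
    hint measurableSet_Iio fun t ht => by
      rw [abs_of_neg (by linarith [ht.out])]; linarith [ht.out]
  have hIoi {b : ℝ} (hb : ε ≤ b) : IntegrableOn (fun t => exp (-|a - t|) / t) (Ioi b) :=
    hint measurableSet_Ioi fun t ht => by
      rw [abs_of_pos (hε.trans_le (hb.trans ht.le))]; linarith [ht.out]
  have hsplit : {t : ℝ | ε < |t|} = Iio (-ε) ∪ Ioi ε := by
    ext t; simp only [mem_ofPred_eq, lt_abs, mem_union, mem_Iio, mem_Ioi, lt_neg]; tauto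
  have hleft :
      ∫ t in Iio (-ε), exp (-|a - t|) / t = exp (-a) * ∫ t in Iio (-ε), exp t / t := by
    rw [← integral_const_mul]
    refine setIntegral_congr_fun measurableSet_Iio fun t ht => ?_
    rw [exp_neg_abs_sub_of_le (by linarith [ht.out]), mul_div_assoc]
  have hmid : ∫ t in ε..a, exp (-|a - t|) / t = exp (-a) * ∫ t in ε..a, exp t / t := by
    rw [← intervalIntegral.integral_const_mul]
    refine intervalIntegral.integral_congr fun t ht => ?_
    rw [uIcc_of_le hεa] at ht
    simp only [exp_neg_abs_sub_of_le ht.2, mul_div_assoc]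
  have hright : ∫ t in Ioi a, exp (-|a - t|) / t = exp a * ∫ t in Ioi a, exp (-t) / t := by
    rw [← integral_const_mul]
    refine setIntegral_congr_fun measurableSet_Ioi fun t ht => ?_
    rw [exp_neg_abs_sub_of_ge ht.out.le, mul_div_assoc]
  have hdisj : Disjoint (Iio (-ε)) (Ioi ε) :=
    (Iic_disjoint_Ioi (by linarith)).mono_left Iio_subset_Iic_self
  rw [hsplit, setIntegral_union hdisj measurableSet_Ioi hIio (hIoi le_rfl),
    ← intervalIntegral.integral_interval_add_Ioi (hIoi le_rfl) (hIoi hεa), hleft, hmid, hright,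
    integral_Iio_exp_div_self, eiTrunc, intervalIntegral_exp_neg_div_self_neg]
  ring

/-- For every `x ≠ 0`, the principal value `PV∫_ℝ e^{−|y|}/(x−y) dy`
exists and equals `sgn(x)·(e^{|x|}·E₁(|x|) + e^{−|x|}·Ei(|x|))`, where
`E₁(x) = ∫_x^∞ e^{−t}/t dt` and
`Ei(x) = −lim_{ε→0⁺}(∫_{−x}^{−ε} e^{−t}/t dt + ∫_ε^∞ e^{−t}/t dt)`. -/
theorem pv_exp_abs (x : ℝ) (hx : x ≠ 0) :
    ∃ Ei : ℝ,
      Tendsto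
        (fun ε : ℝ => -((∫ t in (-|x|)..(-ε), Real.exp (-t) / t)
          + ∫ t in Ioi ε, Real.exp (-t) / t))
        (𝓝[>] 0) (𝓝 Ei)
      ∧ Tendsto
          (fun ε : ℝ => ∫ y in {y : ℝ | ε < |y - x|}, Real.exp (-|y|) / (x - y))
          (𝓝[>] 0)
          (𝓝 (Real.sign x * (Real.exp |x| * (∫ t in Ioi |x|, Real.exp (-t) / t)
            + Real.exp (-|x|) * Ei))) := by
  have ha : 0 < |x| := abs_pos.2 hx
  obtain ⟨Ei, hEi⟩ : ∃ Ei, Tendsto (eiTrunc |x|) (𝓝[>] 0) (𝓝 Ei) :=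
    ⟨_, tendsto_eiTrunc ha⟩
  refine ⟨Ei, hEi, ?_⟩
  have hpv : Tendsto (fun ε => ∫ t in {t : ℝ | ε < |t|}, exp (-|(|x|) - t|) / t)
      (𝓝[>] 0)
      (𝓝 (exp |x| * (∫ t in Ioi |x|, exp (-t) / t) + exp (-|x|) * Ei)) := by
    refine (tendsto_const_nhds.add (hEi.const_mul (exp (-|x|)))).congr' ?_
    filter_upwards [Ioc_mem_nhdsGT ha] with ε hε
    exact (setIntegral_exp_neg_abs_sub_div_self hε.1 hε.2).symm
  simp_rw [setIntegral_div_sub_eq (fun y => exp (-|y|)) x]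
  rcases hx.lt_or_gt with hneg | hpos
  · rw [sign_of_neg hneg, neg_one_mul]
    refine hpv.neg.congr fun ε => ?_
    rw [← setIntegral_abs_gt_comp_neg_div_self, abs_of_neg hneg]
    simp only [sub_neg_eq_add, neg_add_eq_sub, abs_sub_comm]
  · rw [sign_of_pos hpos, one_mul]
    simpa only [abs_of_pos hpos] using hpv
end

section
/- Let f : ℝ → ℝ be a Schwartz function, and for x ∈ ℝ let h(x) := PV∫_ℝ f(y)/(x−y) dy (which exists for every x). Then x·h(x) → ∫_ℝ f(y) dy both as x → +∞ and as x → −∞. In particular, the Hilbert transform (1/π)·h of a Schwartz function decays only like 1/|x| at infinity whenever ∫_ℝ f ≠ 0. -/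
/-!
Substituting `y = x ∓ t` pairs the two sides of the singularity: the truncated integral is
`∫_{t>ε} (f(x-t) - f(x+t))/t dt`, whose integrand is bounded near `t = 0` by the mean value
theorem, so the principal value is the integral over all `t > 0`.

For the asymptotics, split at `t = 1`. Near the singularity the mean value theorem and the decay
`|f'(u)| ≤ C/u²` bound the contribution by `O(1/x²)`. Away from it,
`x/(x-y) = 1 + y/(x-y)` and dominated convergence (with `y f(y)` integrable) give
`x ∫_{|y-x|>1} f(y)/(x-y) dy → ∫ f`.
-/

open MeasureTheory Filter Set Topology

namespace HilbertTransform

noncomputable def truncatedPV (f : ℝ → ℝ) (x ε : ℝ) : ℝ :=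
  ∫ y in {y : ℝ | ε < |y - x|}, f y / (x - y)

/-- Pairing `y = x - t` with `y = x + t` removes the singularity, so for integrable `C¹`
functions this is an honest Lebesgue integral. -/
noncomputable def pv (f : ℝ → ℝ) (x : ℝ) : ℝ :=
  ∫ t in Ioi 0, (f (x - t) - f (x + t)) / t

variable {f : ℝ → ℝ}

lemma measurableSet_lt_abs_sub (x ε : ℝ) : MeasurableSet {y : ℝ | ε < |y - x|} := by
  measurability

lemma integrableOn_div_self_of_lt_abs {φ : ℝ → ℝ} (hφ : Integrable φ) {ε : ℝ} (hε : 0 < ε) :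
    IntegrableOn (fun t => φ t / t) {t : ℝ | ε < |t|} := by
  refine (hφ.norm.div_const ε).integrableOn.mono'
    (hφ.aemeasurable.div aemeasurable_id).aestronglyMeasurable.restrict ?_
  refine (ae_restrict_iff' (by simpa using measurableSet_lt_abs_sub 0 ε)).2
    (ae_of_all _ fun t (ht : ε < |t|) => ?_)
  rw [norm_div, Real.norm_eq_abs t]
  exact div_le_div_of_nonneg_left (norm_nonneg _) hε ht.le

lemma truncatedPV_eq_integral_Ioi (hf : Integrable f) (x : ℝ) {ε : ℝ} (hε : 0 < ε) :
    truncatedPV f x ε = ∫ t in Ioi ε, (f (x - t) - f (x + t)) / t := by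
  have hint := integrableOn_div_self_of_lt_abs (hf.comp_sub_left x) hε
  have hshift : truncatedPV f x ε = ∫ t in {t : ℝ | ε < |t|}, f (x - t) / t := by
    rw [truncatedPV, ← integral_indicator (measurableSet_lt_abs_sub x ε),
      ← integral_indicator (by simpa using measurableSet_lt_abs_sub 0 ε),
      ← integral_sub_left_eq_self _ volume x]
    congr 1
    ext t
    simp [indicator_apply]
  have hsplit : {t : ℝ | ε < |t|} = Ioi ε ∪ Iio (-ε) := by
    ext t
    simp [lt_abs, lt_neg]
  have hIoi : Ioi ε ⊆ {t : ℝ | ε < |t|} := hsplit ▸ subset_union_left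
  have hIio : Iio (-ε) ⊆ {t : ℝ | ε < |t|} := hsplit ▸ subset_union_right
  have hneg : ∫ t in Iio (-ε), f (x - t) / t = -∫ t in Ioi ε, f (x + t) / t := by
    rw [← integral_Iic_eq_integral_Iio, ← integral_comp_neg_Ioi, ← integral_neg]
    simp [div_neg]
  rw [hshift, hsplit, setIntegral_union (Ioi_disjoint_Iio_of_le (by linarith)) measurableSet_Iio
    (hint.mono_set hIoi) (hint.mono_set hIio), hneg, ← sub_eq_add_neg, ← integral_sub
    (hint.mono_set hIoi) ((integrableOn_div_self_of_lt_abs (hf.comp_add_left x) hε).mono_set hIoi)]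
  simp_rw [sub_div]

lemma norm_sub_div_le_of_norm_deriv_le (hf : Differentiable ℝ f) {x r C t : ℝ}
    (hC : ∀ u ∈ Icc (x - r) (x + r), ‖deriv f u‖ ≤ C) (ht : t ∈ Ioc 0 r) :
    ‖(f (x - t) - f (x + t)) / t‖ ≤ 2 * C := by
  obtain ⟨ht0, htr⟩ := ht
  have hmvt := (convex_Icc (x - r) (x + r)).norm_image_sub_le_of_norm_deriv_le
    (fun u _ => hf u) hC (x := x + t) (y := x - t) ⟨by linarith, by linarith⟩
    ⟨by linarith, by linarith⟩
  rw [show x - t - (x + t) = -(2 * t) by ring, norm_neg,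
    Real.norm_of_nonneg (by linarith : (0 : ℝ) ≤ 2 * t)] at hmvt
  rw [norm_div, Real.norm_of_nonneg ht0.le, div_le_iff₀ ht0]
  linarith

lemma integrableOn_Ioi_sub_div (hf : Integrable f) (hf' : ContDiff ℝ 1 f) (x : ℝ) :
    IntegrableOn (fun t => (f (x - t) - f (x + t)) / t) (Ioi 0) := by
  obtain ⟨C, hC⟩ := isCompact_Icc.exists_bound_of_continuousOn
    (hf'.continuous_deriv le_rfl).continuousOn (s := Icc (x - 1) (x + 1))
  have hnear : IntegrableOn (fun t => (f (x - t) - f (x + t)) / t) (Ioc 0 1) := by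
    refine (integrableOn_const (C := 2 * C) (by simp)).mono' ?_
      ((ae_restrict_iff' measurableSet_Ioc).2 (ae_of_all _ fun t ht =>
        norm_sub_div_le_of_norm_deriv_le (hf'.differentiable one_ne_zero) hC ht))
    have hcont := hf'.continuous
    exact (by fun_prop : Measurable fun t => (f (x - t) - f (x + t)) / t).aestronglyMeasurable
  have hfar : IntegrableOn (fun t => (f (x - t) - f (x + t)) / t) (Ioi 1) := by
    have hsub : Ioi (1 : ℝ) ⊆ {t : ℝ | 1 < |t|} := fun t (ht : 1 < t) => ht.trans_le (le_abs_self t)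
    simp_rw [sub_div]
    exact ((integrableOn_div_self_of_lt_abs (hf.comp_sub_left x) one_pos).sub
      (integrableOn_div_self_of_lt_abs (hf.comp_add_left x) one_pos)).mono_set hsub
  rw [← Ioc_union_Ioi_eq_Ioi zero_le_one]
  exact hnear.union hfar

lemma tendsto_truncatedPV (hf : Integrable f) (hf' : ContDiff ℝ 1 f) (x : ℝ) :
    Tendsto (truncatedPV f x) (𝓝[>] 0) (𝓝 (pv f x)) := by
  have hcont := (integrableOn_Ioi_sub_div hf hf' x).continuousWithinAt_Ici_primitive_Ioi
  refine (hcont.tendsto.mono_left (nhdsWithin_mono _ Ioi_subset_Ici_self)).congr' ?_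
  filter_upwards [self_mem_nhdsWithin] with ε hε
  exact (truncatedPV_eq_integral_Ioi hf x hε).symm

lemma pv_eq_integral_Ioc_add_truncatedPV (hf : Integrable f) (hf' : ContDiff ℝ 1 f) (x : ℝ) :
    pv f x = (∫ t in Ioc 0 1, (f (x - t) - f (x + t)) / t) + truncatedPV f x 1 := by
  have hint := integrableOn_Ioi_sub_div hf hf' x
  rw [truncatedPV_eq_integral_Ioi hf x one_pos, pv, ← Ioc_union_Ioi_eq_Ioi zero_le_one,
    setIntegral_union Ioc_disjoint_Ioi_same measurableSet_Ioi (hint.mono_set Ioc_subset_Ioi_self)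
      (hint.mono_set (Ioi_subset_Ioi zero_le_one))]

lemma tendsto_mul_truncatedPV (hf : Integrable f) (hf₁ : Integrable fun y => y * f y)
    {δ : ℝ} (hδ : 0 < δ) :
    Tendsto (fun x => x * truncatedPV f x δ) (cocompact ℝ) (𝓝 (∫ y, f y)) := by
  have hdist (y : ℝ) : Tendsto (fun x => |x - y|) (cocompact ℝ) atTop :=
    tendsto_atTop_mono (fun x => abs_sub_abs_le_abs_sub x y)
      (tendsto_atTop_add_const_right _ _ tendsto_norm_cocompact_atTop)
  have hmul_eq {x y : ℝ} (hy : δ < |y - x|) : x * (f y / (x - y)) = f y + y * f y / (x - y) := by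
    have : x - y ≠ 0 := by
      rw [abs_sub_comm] at hy
      exact abs_pos.1 (hδ.trans hy)
    field_simp
    ring
  simp_rw [truncatedPV, ← integral_const_mul, ← integral_indicator (measurableSet_lt_abs_sub _ δ)]
  rw [cocompact_eq_atBot_atTop] at hdist ⊢
  refine tendsto_integral_filter_of_dominated_convergence (fun y => ‖f y‖ + ‖y * f y‖ / δ)
    (Eventually.of_forall fun x => ?_) (Eventually.of_forall fun x => ae_of_all _ fun y => ?_)
    (hf.norm.add (hf₁.norm.div_const δ)) (ae_of_all _ fun y => ?_)
  · have hmeas := hf.aemeasurable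
    exact (AEMeasurable.aestronglyMeasurable (by fun_prop)).indicator
      (measurableSet_lt_abs_sub x δ)
  · by_cases hy : y ∈ {y : ℝ | δ < |y - x|}
    · rw [indicator_of_mem hy, hmul_eq hy]
      refine (norm_add_le _ _).trans (add_le_add le_rfl ?_)
      rw [norm_div, Real.norm_eq_abs (x - y), abs_sub_comm]
      exact div_le_div_of_nonneg_left (norm_nonneg _) hδ hy.le
    · rw [indicator_of_notMem hy, norm_zero]
      positivity
  · have hdecay : Tendsto (fun x => y * f y / (x - y)) (atBot ⊔ atTop) (𝓝 0) := by
      rw [tendsto_zero_iff_norm_tendsto_zero]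
      simp_rw [norm_div, Real.norm_eq_abs (_ - y)]
      exact tendsto_const_nhds.div_atTop (hdist y)
    refine (add_zero (f y) ▸ tendsto_const_nhds.add hdecay).congr' ?_
    filter_upwards [(hdist y).eventually_gt_atTop δ] with x hx
    rw [abs_sub_comm] at hx
    rw [indicator_of_mem (show y ∈ {y : ℝ | δ < |y - x|} from hx), hmul_eq hx]

lemma tendsto_mul_integral_Ioc_sub_div (hf : Differentiable ℝ f) {C : ℝ}
    (hC : ∀ u, ‖u‖ ^ 2 * ‖deriv f u‖ ≤ C) :
    Tendsto (fun x => x * ∫ t in Ioc 0 1, (f (x - t) - f (x + t)) / t) (cocompact ℝ) (𝓝 0) := by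
  refine squeeze_zero_norm' ?_
    (tendsto_const_nhds.div_atTop tendsto_norm_cocompact_atTop : Tendsto (fun x => 8 * C / ‖x‖) _ _)
  filter_upwards [tendsto_norm_cocompact_atTop.eventually_ge_atTop 2] with x hx
  have hderiv : ∀ u ∈ Icc (x - 1) (x + 1), ‖deriv f u‖ ≤ 4 * C / ‖x‖ ^ 2 := by
    intro u ⟨hu₁, hu₂⟩
    have hxu : ‖x‖ ≤ 2 * ‖u‖ := by
      simp only [Real.norm_eq_abs] at hx ⊢
      have hxu₁ : |x - u| ≤ 1 := abs_le.2 ⟨by linarith, by linarith⟩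
      linarith [abs_sub_abs_le_abs_sub x u]
    rw [le_div_iff₀ (by positivity)]
    calc ‖deriv f u‖ * ‖x‖ ^ 2 ≤ ‖deriv f u‖ * (2 * ‖u‖) ^ 2 := by gcongr
      _ = 4 * (‖u‖ ^ 2 * ‖deriv f u‖) := by ring
      _ ≤ 4 * C := by gcongr; exact hC u
  have hint := norm_setIntegral_le_of_norm_le_const (μ := volume) measure_Ioc_lt_top
    fun t ht => norm_sub_div_le_of_norm_deriv_le hf hderiv (t := t) ht
  rw [Real.volume_real_Ioc_of_le zero_le_one, sub_zero, mul_one] at hint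
  have hx0 : ‖x‖ ≠ 0 := by positivity
  calc ‖x * ∫ t in Ioc 0 1, (f (x - t) - f (x + t)) / t‖
      ≤ ‖x‖ * (2 * (4 * C / ‖x‖ ^ 2)) := by rw [norm_mul]; gcongr
    _ = 8 * C / ‖x‖ := by field_simp; ring

lemma tendsto_mul_pv (hf : Integrable f) (hf₁ : Integrable fun y => y * f y)
    (hf' : ContDiff ℝ 1 f) {C : ℝ} (hC : ∀ u, ‖u‖ ^ 2 * ‖deriv f u‖ ≤ C) :
    Tendsto (fun x => x * pv f x) (cocompact ℝ) (𝓝 (∫ y, f y)) := by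
  have h := (tendsto_mul_integral_Ioc_sub_div (hf'.differentiable one_ne_zero) hC).add
    (tendsto_mul_truncatedPV hf hf₁ one_pos)
  rw [zero_add] at h
  exact h.congr fun x => by rw [pv_eq_integral_Ioc_add_truncatedPV hf hf' x, mul_add]

end HilbertTransform

/-- For a Schwartz function `f : ℝ → ℝ`, the principal value
`h(x) = PV∫_ℝ f(y)/(x−y) dy` exists for every `x`, and `x·h(x) → ∫_ℝ f(y) dy` both
as `x → +∞` and as `x → −∞`: the Hilbert transform of a Schwartz function decays
only like `1/|x|` at infinity whenever `∫_ℝ f ≠ 0`. -/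
theorem pv_schwartz_decay (f : SchwartzMap ℝ ℝ) :
    ∃ h : ℝ → ℝ,
      (∀ x : ℝ,
        Tendsto
          (fun ε : ℝ => ∫ y in {y : ℝ | ε < |y - x|}, f y / (x - y))
          (𝓝[>] 0) (𝓝 (h x)))
      ∧ Tendsto (fun x : ℝ => x * h x) atTop (𝓝 (∫ y : ℝ, f y))
      ∧ Tendsto (fun x : ℝ => x * h x) atBot (𝓝 (∫ y : ℝ, f y)) := by
  have hf : Integrable f := f.integrable
  have hf' : ContDiff ℝ 1 f := f.smooth 1
  have hf₁ : Integrable fun y => y * f y :=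
    (f.integrable_pow_mul volume 1).mono' (by fun_prop) (ae_of_all _ fun y => by simp)
  obtain ⟨C, -, hC⟩ := f.decay 2 1
  simp only [norm_iteratedFDeriv_eq_norm_iteratedDeriv, iteratedDeriv_one] at hC
  have hlim := HilbertTransform.tendsto_mul_pv hf hf₁ hf' hC
  exact ⟨HilbertTransform.pv f, HilbertTransform.tendsto_truncatedPV hf hf',
    hlim.mono_left atTop_le_cocompact, hlim.mono_left atBot_le_cocompact⟩
end

section
/- Let f : ℝ → ℝ be a Schwartz function with ∫_ℝ f(y) dy ≠ 0, and for x ∈ ℝ let h(x) := PV∫_ℝ f(y)/(x−y) dy (which exists for every x). Then h is not Lebesgue integrable on ℝ; in particular, the Hilbert transform of a Schwartz function with nonzero mean is never rapidly decreasing. -/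
/-!
Pairing `y = x - t` with `y = x + t` turns the principal value into the absolutely convergent
integral `h(x) = ∫_{t > 0} (f(x - t) - f(x + t)) / t dt`. Since `x / (x - y) = 1 + y / (x - y)`,
`x h(x) = ∫ f + h_ψ(x)`, where `h_ψ` is the same transform of the Schwartz function
`ψ(y) = y f(y)`, and `h_ψ(x) = O(1 / x)`: for `t ≤ x / 2` by the mean value theorem and the decay
of `ψ'`, for `t > x / 2` because `1 / t < 2 / x`. Hence `x h(x) → ∫ f ≠ 0`, so `|h|` is bounded
below by a multiple of `1 / x` at infinity and is not integrable.
-/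

open MeasureTheory Filter Set Topology
open scoped NNReal SchwartzMap

theorem tendsto_setIntegral_Ioi_nhdsGT {E : Type*} [NormedAddCommGroup E] [NormedSpace ℝ E]
    {g : ℝ → E} {a : ℝ} (hg : IntegrableOn g (Ioi a)) :
    Tendsto (fun ε => ∫ t in Ioi ε, g t) (𝓝[>] a) (𝓝 (∫ t in Ioi a, g t)) := by
  have hint : IntervalIntegrable g volume (min a a) (max a (a + 1)) := by
    rw [min_self, max_eq_right (by linarith),
      intervalIntegrable_iff_integrableOn_Ioc_of_le (by linarith)]
    exact hg.mono_set Ioc_subset_Ioi_self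
  have hprim : Tendsto (fun ε => ∫ t in a..ε, g t) (𝓝[>] a) (𝓝 0) := by
    simpa using ((intervalIntegral.continuousWithinAt_primitive (measure_singleton a)
      hint).mono_of_mem_nhdsWithin (Icc_mem_nhdsGT (by linarith))).tendsto
  have heq : ∀ᶠ ε in 𝓝[>] a,
      (∫ t in Ioi a, g t) - ∫ t in a..ε, g t = ∫ t in Ioi ε, g t := by
    filter_upwards [self_mem_nhdsWithin] with ε hε
    rw [← intervalIntegral.integral_Ioi_sub_Ioi hg (le_of_lt hε), sub_sub_cancel]
  simpa using (tendsto_const_nhds.sub hprim).congr' heq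

theorem setIntegral_lt_abs_eq_integral_Ioi {E : Type*} [NormedAddCommGroup E] [NormedSpace ℝ E]
    {F : ℝ → E} {ε : ℝ} (hε : 0 ≤ ε) (hF : IntegrableOn F {t | ε < |t|}) :
    ∫ t in {t | ε < |t|}, F t = ∫ t in Ioi ε, (F t + F (-t)) := by
  have hset : {t : ℝ | ε < |t|} = Iio (-ε) ∪ Ioi ε := by
    ext t; simp only [mem_ofPred_eq, lt_abs, mem_union, mem_Iio, mem_Ioi, lt_neg, or_comm]
  rw [hset] at hF ⊢
  have hneg : IntegrableOn (fun t => F (-t)) (Ioi ε) := by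
    have := ((Measure.measurePreserving_neg (volume : Measure ℝ)).integrableOn_comp_preimage
      (Homeomorph.neg ℝ).measurableEmbedding).2 (hF.mono_set subset_union_left)
    simpa [Function.comp_def] using this
  rw [setIntegral_union (Iio_disjoint_Ioi_of_le (by linarith)) measurableSet_Ioi
    (hF.mono_set subset_union_left) (hF.mono_set subset_union_right),
    integral_add (hF.mono_set subset_union_right) hneg, add_comm, integral_comp_neg_Ioi,
    restrict_Iio_eq_restrict_Iic]

noncomputable def hilbertIntegrand (φ : ℝ → ℝ) (x t : ℝ) : ℝ := (φ (x - t) - φ (x + t)) / t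

/-- The Hilbert transform without the factor `1 / π`. -/
noncomputable def hilbert (φ : ℝ → ℝ) (x : ℝ) : ℝ := ∫ t in Ioi 0, hilbertIntegrand φ x t

section

variable {φ : ℝ → ℝ}

theorem integrableOn_lt_abs_div {ψ : ℝ → ℝ} (hψ : Integrable ψ) {ε : ℝ} (hε : 0 < ε) :
    IntegrableOn (fun t => ψ t / t) {t | ε < |t|} := by
  refine Integrable.mono' (hψ.norm.const_mul ε⁻¹).integrableOn
    (hψ.aestronglyMeasurable.mul measurable_inv.aestronglyMeasurable).restrict ?_
  filter_upwards [ae_restrict_mem (measurableSet_lt measurable_const measurable_abs)] with t ht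
  rw [norm_div, Real.norm_eq_abs t, div_eq_inv_mul]
  gcongr

theorem setIntegral_lt_abs_sub_div_eq (hφ : Integrable φ) (x : ℝ) {ε : ℝ} (hε : 0 < ε) :
    ∫ y in {y | ε < |y - x|}, φ y / (x - y) = ∫ t in Ioi ε, hilbertIntegrand φ x t := by
  have hsub : ∫ y in {y | ε < |y - x|}, φ y / (x - y)
      = ∫ t in {t | ε < |t|}, φ (x - t) / t := by
    have := (Measure.measurePreserving_sub_left volume x).setIntegral_preimage_emb
      (Homeomorph.subLeft x).measurableEmbedding (fun y => φ y / (x - y)) {y | ε < |y - x|}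
    simpa [abs_sub_comm] using this.symm
  rw [hsub, setIntegral_lt_abs_eq_integral_Ioi hε.le
    (integrableOn_lt_abs_div (hφ.comp_sub_left x) hε)]
  congr 1 with t
  rw [hilbertIntegrand, sub_neg_eq_add, div_neg, ← sub_eq_add_neg, sub_div]

theorem abs_hilbertIntegrand_le {K : ℝ≥0} (hφ : LipschitzWith K φ) (x t : ℝ) :
    |hilbertIntegrand φ x t| ≤ 2 * K := by
  rcases eq_or_ne t 0 with rfl | ht
  · simp [hilbertIntegrand]
  rw [hilbertIntegrand, abs_div, div_le_iff₀ (abs_pos.2 ht)]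
  calc |φ (x - t) - φ (x + t)| ≤ K * |(x - t) - (x + t)| := by
        simpa only [Real.dist_eq] using hφ.dist_le_mul (x - t) (x + t)
    _ = 2 * K * |t| := by
        rw [show (x - t) - (x + t) = -(2 * t) by ring, abs_neg, abs_mul, abs_two]; ring

theorem abs_hilbertIntegrand_le_of_le {a t : ℝ} (ha : 0 < a) (hat : a ≤ t) (x : ℝ) :
    |hilbertIntegrand φ x t| ≤ (|φ (x - t)| + |φ (x + t)|) / a := by
  rw [hilbertIntegrand, abs_div, abs_of_pos (ha.trans_le hat)]
  calc |φ (x - t) - φ (x + t)| / t ≤ (|φ (x - t)| + |φ (x + t)|) / t := by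
        gcongr
        · linarith
        · exact abs_sub _ _
    _ ≤ (|φ (x - t)| + |φ (x + t)|) / a := by gcongr

theorem aestronglyMeasurable_hilbertIntegrand (hφ : Integrable φ) (x : ℝ) :
    AEStronglyMeasurable (hilbertIntegrand φ x) := by
  rw [show hilbertIntegrand φ x = fun t => (φ (x - t) - φ (x + t)) * t⁻¹ from
    funext fun t => div_eq_mul_inv _ _]
  exact ((hφ.comp_sub_left x).1.sub (hφ.comp_add_left x).1).mul
    measurable_inv.aestronglyMeasurable

theorem integrableOn_Ioi_hilbertIntegrand (hφ : Integrable φ) {a : ℝ} (ha : 0 < a) (x : ℝ) :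
    IntegrableOn (hilbertIntegrand φ x) (Ioi a) := by
  have hdom : Integrable (fun t => (‖φ (x - t)‖ + ‖φ (x + t)‖) / a) :=
    ((hφ.comp_sub_left x).norm.add (hφ.comp_add_left x).norm).div_const a
  refine hdom.integrableOn.mono' (aestronglyMeasurable_hilbertIntegrand hφ x).restrict ?_
  filter_upwards [ae_restrict_mem measurableSet_Ioi] with t ht
  exact abs_hilbertIntegrand_le_of_le ha (le_of_lt ht) x

theorem abs_setIntegral_Ioi_hilbertIntegrand_le (hφ : Integrable φ) {a : ℝ} (ha : 0 < a)
    (x : ℝ) :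
    |∫ t in Ioi a, hilbertIntegrand φ x t| ≤ 2 * (∫ u, |φ u|) / a := by
  have hdom : Integrable (fun t => (|φ (x - t)| + |φ (x + t)|) / a) :=
    ((hφ.comp_sub_left x).abs.add (hφ.comp_add_left x).abs).div_const a
  calc |∫ t in Ioi a, hilbertIntegrand φ x t|
      ≤ ∫ t in Ioi a, (|φ (x - t)| + |φ (x + t)|) / a := by
        rw [← Real.norm_eq_abs]
        refine norm_integral_le_of_norm_le hdom.integrableOn ?_
        filter_upwards [ae_restrict_mem measurableSet_Ioi] with t ht
        exact abs_hilbertIntegrand_le_of_le ha (le_of_lt ht) x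
    _ ≤ ∫ t, (|φ (x - t)| + |φ (x + t)|) / a :=
        setIntegral_le_integral hdom (ae_of_all _ fun t => by positivity)
    _ = 2 * (∫ u, |φ u|) / a := by
        rw [integral_div, integral_add (hφ.comp_sub_left x).abs (hφ.comp_add_left x).abs,
          integral_sub_left_eq_self (fun u => |φ u|) volume x,
          integral_add_left_eq_self (fun u => |φ u|) x]
        ring

theorem integrableOn_hilbertIntegrand {K : ℝ≥0} (hφ : Integrable φ) (hL : LipschitzWith K φ)
    (x : ℝ) : IntegrableOn (hilbertIntegrand φ x) (Ioi 0) := by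
  rw [← Ioc_union_Ioi_eq_Ioi zero_le_one]
  refine IntegrableOn.union ?_ (integrableOn_Ioi_hilbertIntegrand hφ one_pos x)
  exact Measure.integrableOn_of_bounded (M := 2 * K) measure_Ioc_lt_top.ne
    (aestronglyMeasurable_hilbertIntegrand hφ x)
    (ae_of_all _ fun t => abs_hilbertIntegrand_le hL x t)

theorem tendsto_setIntegral_lt_abs_sub_div {K : ℝ≥0} (hφ : Integrable φ)
    (hL : LipschitzWith K φ) (x : ℝ) :
    Tendsto (fun ε => ∫ y in {y | ε < |y - x|}, φ y / (x - y)) (𝓝[>] 0) (𝓝 (hilbert φ x)) :=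
  (tendsto_setIntegral_Ioi_nhdsGT (integrableOn_hilbertIntegrand hφ hL x)).congr'
    (eventually_nhdsWithin_of_forall fun _ hε => (setIntegral_lt_abs_sub_div_eq hφ x hε).symm)

theorem integral_Ioi_sub_add_eq_integral (hφ : Integrable φ) (x : ℝ) :
    ∫ t in Ioi 0, (φ (x - t) + φ (x + t)) = ∫ u, φ u := by
  have h := hφ.comp_add_left x
  have hrefl : ∫ t in Ioi (0 : ℝ), φ (x - t) = ∫ t in Iic 0, φ (x + t) := by
    simpa [sub_eq_add_neg] using integral_comp_neg_Ioi 0 (fun t => φ (x + t))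
  rw [integral_add (hφ.comp_sub_left x).integrableOn h.integrableOn, hrefl,
    intervalIntegral.integral_Iic_add_Ioi h.integrableOn h.integrableOn,
    integral_add_left_eq_self φ]

theorem hilbert_mul_self_eq {K : ℝ≥0} (hφ : Integrable φ) (hL : LipschitzWith K φ) (x : ℝ) :
    hilbert (fun u => u * φ u) x = x * hilbert φ x - ∫ u, φ u := by
  have hpt : ∀ t ∈ Ioi (0 : ℝ), hilbertIntegrand (fun u => u * φ u) x t
      = x * hilbertIntegrand φ x t - (φ (x - t) + φ (x + t)) := by
    intro t ht
    simp only [hilbertIntegrand]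
    field_simp [(mem_Ioi.1 ht).ne']
    ring
  have hsum : Integrable (fun t => φ (x - t) + φ (x + t)) :=
    (hφ.comp_sub_left x).add (hφ.comp_add_left x)
  rw [hilbert, setIntegral_congr_fun measurableSet_Ioi hpt,
    integral_sub ((integrableOn_hilbertIntegrand hφ hL x).const_mul x) hsum.integrableOn,
    integral_const_mul, integral_Ioi_sub_add_eq_integral hφ x, hilbert]

theorem abs_hilbertIntegrand_le_of_sq_mul_abs_deriv_le (hd : Differentiable ℝ φ) {C : ℝ}
    (hC : ∀ u, u ^ 2 * |deriv φ u| ≤ C) {x t : ℝ} (ht : t ∈ Ioc 0 (x / 2)) :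
    |hilbertIntegrand φ x t| ≤ 8 * C / x ^ 2 := by
  obtain ⟨ht0, htx⟩ := ht
  have hx : 0 < x := by linarith
  have hderiv : ∀ u ∈ Icc (x - t) (x + t), ‖deriv φ u‖ ≤ 4 * C / x ^ 2 := by
    intro u hu
    have hxu : x ≤ 2 * u := by linarith [hu.1]
    rw [Real.norm_eq_abs, le_div_iff₀ (by positivity)]
    calc |deriv φ u| * x ^ 2 ≤ |deriv φ u| * (2 * u) ^ 2 := by gcongr
      _ = 4 * (u ^ 2 * |deriv φ u|) := by ring
      _ ≤ 4 * C := by linarith [hC u]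
  have hmvt := Convex.norm_image_sub_le_of_norm_deriv_le (fun u _ => hd u) hderiv
    (convex_Icc _ _) (right_mem_Icc.2 (by linarith : x - t ≤ x + t))
    (left_mem_Icc.2 (by linarith : x - t ≤ x + t))
  rw [Real.norm_eq_abs, Real.norm_eq_abs, show x - t - (x + t) = -(2 * t) by ring, abs_neg,
    abs_of_pos (by linarith : 0 < 2 * t)] at hmvt
  rw [hilbertIntegrand, abs_div, abs_of_pos ht0, div_le_iff₀ ht0]
  exact hmvt.trans_eq (by ring)

theorem abs_hilbert_le (hφ : Integrable φ) (hd : Differentiable ℝ φ) {C : ℝ}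
    (hC : ∀ u, u ^ 2 * |deriv φ u| ≤ C) {x : ℝ} (hx : 0 < x) :
    |hilbert φ x| ≤ (4 * C + 4 * ∫ u, |φ u|) / x := by
  have hnear_bound : ∀ t ∈ Ioc 0 (x / 2), |hilbertIntegrand φ x t| ≤ 8 * C / x ^ 2 :=
    fun t ht => abs_hilbertIntegrand_le_of_sq_mul_abs_deriv_le hd hC ht
  have hnear : IntegrableOn (hilbertIntegrand φ x) (Ioc 0 (x / 2)) :=
    Measure.integrableOn_of_bounded (M := 8 * C / x ^ 2) measure_Ioc_lt_top.ne
      (aestronglyMeasurable_hilbertIntegrand hφ x)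
      ((ae_restrict_mem measurableSet_Ioc).mono hnear_bound)
  have hsplit : hilbert φ x = (∫ t in Ioc 0 (x / 2), hilbertIntegrand φ x t)
      + ∫ t in Ioi (x / 2), hilbertIntegrand φ x t := by
    rw [hilbert, ← Ioc_union_Ioi_eq_Ioi (half_pos hx).le, setIntegral_union
      Ioc_disjoint_Ioi_same measurableSet_Ioi hnear
      (integrableOn_Ioi_hilbertIntegrand hφ (half_pos hx) x)]
  have hnear_le :
      |∫ t in Ioc 0 (x / 2), hilbertIntegrand φ x t| ≤ 8 * C / x ^ 2 * (x / 2) := by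
    simpa [(half_pos hx).le] using
      norm_setIntegral_le_of_norm_le_const (f := hilbertIntegrand φ x) (μ := volume)
        measure_Ioc_lt_top hnear_bound
  have hfar := abs_setIntegral_Ioi_hilbertIntegrand_le hφ (half_pos hx) x
  calc |hilbert φ x| ≤ 8 * C / x ^ 2 * (x / 2) + 2 * (∫ u, |φ u|) / (x / 2) := by
        rw [hsplit]; exact (abs_add_le _ _).trans (add_le_add hnear_le hfar)
    _ = (4 * C + 4 * ∫ u, |φ u|) / x := by field_simp; ring

end

theorem not_integrable_of_tendsto_mul_atTop {h : ℝ → ℝ} {c : ℝ} (hc : c ≠ 0)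
    (hh : Tendsto (fun x => x * h x) atTop (𝓝 c)) : ¬ Integrable h := by
  intro hint
  have hO : (fun x : ℝ => x⁻¹) =O[atTop] h :=
    Asymptotics.isBigO_of_div_tendsto_nhds_of_ne_zero
      (by simpa [div_inv_eq_mul, mul_comm] using hh) hc
  obtain ⟨a, ha⟩ := integrableAtFilter_atTop_iff.1 (hO.integrableAtFilter
    measurable_inv.stronglyMeasurable.stronglyMeasurableAtFilter (hint.integrableAtFilter atTop))
  exact not_integrableOn_Ici_inv ha

namespace SchwartzMap

theorem exists_pow_mul_abs_deriv_le (f : 𝓢(ℝ, ℝ)) (k : ℕ) :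
    ∃ C, ∀ u, |u| ^ k * |deriv f u| ≤ C := by
  obtain ⟨C, -, hC⟩ := (derivCLM ℝ ℝ f).decay k 0
  exact ⟨C, fun u => by simpa using hC u⟩

theorem exists_lipschitzWith (f : 𝓢(ℝ, ℝ)) : ∃ K, LipschitzWith K f := by
  obtain ⟨C, hC⟩ := f.exists_pow_mul_abs_deriv_le 0
  refine ⟨C.toNNReal, lipschitzWith_of_nnnorm_deriv_le f.differentiable fun u => ?_⟩
  rw [← NNReal.coe_le_coe, coe_nnnorm]
  simpa using (hC u).trans (le_max_left C 0)

theorem tendsto_mul_hilbert_atTop (f : 𝓢(ℝ, ℝ)) :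
    Tendsto (fun x => x * hilbert f x) atTop (𝓝 (∫ u, f u)) := by
  set ψ := smulLeftCLM ℝ (fun u : ℝ => u) f
  have hψ : ⇑ψ = fun u => u * f u :=
    funext fun u => smulLeftCLM_apply_apply Function.HasTemperateGrowth.id' f u
  obtain ⟨K, hK⟩ := f.exists_lipschitzWith
  obtain ⟨C, hC⟩ := ψ.exists_pow_mul_abs_deriv_le 2
  have hdecay : Tendsto (hilbert ψ) atTop (𝓝 0) := by
    refine squeeze_zero_norm' ?_
      ((tendsto_const_nhds (x := 4 * C + 4 * ∫ u, |ψ u|)).div_atTop tendsto_id)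
    filter_upwards [eventually_gt_atTop 0] with x hx
    exact abs_hilbert_le ψ.integrable ψ.differentiable (fun u => by simpa using hC u) hx
  have hlim := hdecay.const_add (∫ u, f u)
  rw [add_zero] at hlim
  refine hlim.congr fun x => ?_
  rw [hψ, hilbert_mul_self_eq f.integrable hK]
  ring

end SchwartzMap

/-- For a Schwartz function `f : ℝ → ℝ` with `∫_ℝ f(y) dy ≠ 0`, the
principal value `h(x) = PV∫_ℝ f(y)/(x−y) dy` exists for every `x`, and `h` is not
Lebesgue integrable on `ℝ`: the Hilbert transform of a Schwartz function with
nonzero mean is never rapidly decreasing. -/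
theorem pv_schwartz_not_integrable (f : SchwartzMap ℝ ℝ)
    (hf : (∫ y : ℝ, f y) ≠ 0) :
    ∃ h : ℝ → ℝ,
      (∀ x : ℝ,
        Tendsto
          (fun ε : ℝ => ∫ y in {y : ℝ | ε < |y - x|}, f y / (x - y))
          (𝓝[>] 0) (𝓝 (h x)))
      ∧ ¬ Integrable h := by
  obtain ⟨K, hK⟩ := f.exists_lipschitzWith
  exact ⟨hilbert f, fun x => tendsto_setIntegral_lt_abs_sub_div f.integrable hK x,
    not_integrable_of_tendsto_mul_atTop hf f.tendsto_mul_hilbert_atTop⟩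
end
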